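/- arXiv:1110.3343 — 6 statements merged into one kernel-verified Lean document; each statement's English description precedes it below -/
import Mathlib

section
/- Let f, U : (0,∞) → (0,∞) be functions with f(t) ≤ U(t) for all t > 0, and suppose f is log-convex. Let 0 < α < 1, 0 < s < 1 and t > 0, and let p := s(1−α)/(1−αs) (equivalently, p is the unique solution of p + (1−p)αs = s). Then f(ts) ≤ U(αts)^{1−p} · U(t)^p · (f(t)/U(t))^p. -/
/-!
Log-convexity on the segment from `α t s` to `t`, with weight `p` at `t`, gives
`f(ts) ≤ f(αts)^{1-p} f(t)^p`: the exponent `p = s(1-α)/(1-αs)` is exactly the weight with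
`(1-p)·αts + p·t = ts`. It remains to bound `f(αts) ≤ U(αts)` and to split
`f(t)^p = U(t)^p (f(t)/U(t))^p`.
-/

open Real

def IsLogConvexOnPos (f : ℝ → ℝ) : Prop :=
  ∀ a b : ℝ, 0 < a → 0 < b → ∀ l : ℝ, 0 ≤ l → l ≤ 1 →
    f (l * a + (1 - l) * b) ≤ f a ^ l * f b ^ (1 - l)

theorem IsLogConvexOnPos.le_rpow_mul_rpow_of_le {f U : ℝ → ℝ} (hf : IsLogConvexOnPos f)
    {a b l : ℝ} (ha : 0 < a) (hb : 0 < b) (hl0 : 0 ≤ l) (hl1 : l ≤ 1)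
    (hfa : 0 ≤ f a) (hfb : 0 ≤ f b) (hfU : f a ≤ U a) :
    f (l * a + (1 - l) * b) ≤ U a ^ l * f b ^ (1 - l) :=
  calc f (l * a + (1 - l) * b) ≤ f a ^ l * f b ^ (1 - l) := hf a b ha hb l hl0 hl1
    _ ≤ U a ^ l * f b ^ (1 - l) := by gcongr

section DaviesExponent

variable {α s : ℝ}

theorem one_sub_mul_pos_of_lt_one (hα1 : α < 1) (hs0 : 0 < s) (hs1 : s < 1) :
    0 < 1 - α * s := by
  nlinarith

theorem davies_exponent_pos (hα1 : α < 1) (hs0 : 0 < s) (hs1 : s < 1) :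
    0 < s * (1 - α) / (1 - α * s) :=
  div_pos (mul_pos hs0 (sub_pos.mpr hα1)) (one_sub_mul_pos_of_lt_one hα1 hs0 hs1)

theorem davies_exponent_lt_one (hα1 : α < 1) (hs0 : 0 < s) (hs1 : s < 1) :
    s * (1 - α) / (1 - α * s) < 1 := by
  rw [div_lt_one (one_sub_mul_pos_of_lt_one hα1 hs0 hs1)]
  nlinarith

theorem davies_exponent_interpolates (h : 1 - α * s ≠ 0) :
    (1 - s * (1 - α) / (1 - α * s)) * (α * s) + s * (1 - α) / (1 - α * s) = s := by
  rw [div_eq_mul_inv]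
  linear_combination s * (1 - α) * mul_inv_cancel₀ h

end DaviesExponent

theorem rpow_mul_div_rpow {x y : ℝ} (hx : 0 < x) (hy : 0 ≤ y) (p : ℝ) :
    x ^ p * (y / x) ^ p = y ^ p := by
  rw [← mul_rpow hx.le (div_nonneg hy hx.le), mul_div_cancel₀ _ hx.ne']

/-- **Davies' interpolation lemma** (abstract real-variable form).
If `f, U : (0,∞) → (0,∞)` satisfy `f ≤ U`, `f` is log-convex, `0 < α < 1`,
`0 < s < 1`, `t > 0` and `p := s(1−α)/(1−αs)`, then
`f(ts) ≤ U(αts)^{1−p} · U(t)^p · (f(t)/U(t))^p`. -/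
theorem davies_interpolation
    (f U : ℝ → ℝ)
    (hf_pos : ∀ t : ℝ, 0 < t → 0 < f t)
    (hU_pos : ∀ t : ℝ, 0 < t → 0 < U t)
    (hfU : ∀ t : ℝ, 0 < t → f t ≤ U t)
    (hf_logconvex : ∀ a b : ℝ, 0 < a → 0 < b → ∀ l : ℝ, 0 ≤ l → l ≤ 1 →
      f (l * a + (1 - l) * b) ≤ f a ^ l * f b ^ (1 - l))
    (α s t : ℝ) (hα0 : 0 < α) (hα1 : α < 1) (hs0 : 0 < s) (hs1 : s < 1) (ht : 0 < t)
    (p : ℝ) (hp : p = s * (1 - α) / (1 - α * s)) :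
    f (t * s) ≤ U (α * t * s) ^ (1 - p) * U t ^ p * (f t / U t) ^ p := by
  have hp0 : 0 < p := hp ▸ davies_exponent_pos hα1 hs0 hs1
  have hp1 : p < 1 := hp ▸ davies_exponent_lt_one hα1 hs0 hs1
  have hats : 0 < α * t * s := by positivity
  have hpoint : (1 - p) * (α * t * s) + (1 - (1 - p)) * t = t * s := by
    have hweight := davies_exponent_interpolates (one_sub_mul_pos_of_lt_one hα1 hs0 hs1).ne'
    rw [← hp] at hweight
    linear_combination t * hweight
  have hf : IsLogConvexOnPos f := hf_logconvex
  have hinterp := hf.le_rpow_mul_rpow_of_le (U := U) (l := 1 - p)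
    hats ht (by linarith) (by linarith) (hf_pos _ hats).le (hf_pos t ht).le (hfU _ hats)
  rw [hpoint, sub_sub_cancel] at hinterp
  rwa [mul_assoc, rpow_mul_div_rpow (hU_pos t ht) (hf_pos t ht).le]
end

section
/- Let H be a complex Hilbert space and A : H → H a bounded self-adjoint operator which is coercive, i.e. there is ε > 0 with Re⟨Ag, g⟩ ≥ ε‖g‖² for all g ∈ H. Then A is invertible, and for every ω ∈ H, Re⟨A^{−1}ω, ω⟩ = sup over all g ∈ H with g ≠ 0 of |⟨g, ω⟩|² / Re⟨Ag, g⟩. -/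
/-!
Coercivity makes `A` a unit (Lax–Milgram), and positivity of `A` in the C⋆-algebra of operators
writes it as `A = S† S`. With `u = A⁻¹ ω` we get `⟪g, ω⟫ = ⟪A g, u⟫ = ⟪S g, S u⟫` and
`Re ⟪A g, g⟫ = ‖S g‖²`, so by Cauchy–Schwarz every quotient is at most `‖S u‖² = Re ⟪A⁻¹ ω, ω⟫`,
with equality at `g = u`.
-/

open scoped ComplexInnerProductSpace InnerProductSpace

theorem LinearMap.iSup_norm_inner_sq_div_norm_sq {𝕜 E F : Type*} [RCLike 𝕜] [AddCommGroup E]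
    [Module 𝕜 E] [NormedAddCommGroup F] [InnerProductSpace 𝕜 F] (T : E →ₗ[𝕜] F) (u : E) :
    ⨆ g : {g : E // g ≠ 0}, ‖⟪T g, T u⟫_𝕜‖ ^ 2 / ‖T g‖ ^ 2 = ‖T u‖ ^ 2 := by
  have hle (g : E) : ‖⟪T g, T u⟫_𝕜‖ ^ 2 / ‖T g‖ ^ 2 ≤ ‖T u‖ ^ 2 := by
    rcases eq_or_ne (T g) 0 with hg | hg
    · simp [hg]
    rw [div_le_iff₀ (by positivity), ← mul_pow, mul_comm]
    exact pow_le_pow_left₀ (norm_nonneg _) (norm_inner_le_norm _ _) 2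
  refine le_antisymm (Real.iSup_le (fun g ↦ hle g) (by positivity)) ?_
  rcases eq_or_ne (T u) 0 with hu | hu
  · rw [hu, norm_zero, zero_pow two_ne_zero]
    exact Real.iSup_nonneg fun _ ↦ by positivity
  have hu₀ : u ≠ 0 := fun h ↦ hu (by rw [h, map_zero])
  refine le_ciSup_of_le ⟨‖T u‖ ^ 2, Set.forall_mem_range.2 fun g ↦ hle g⟩ ⟨u, hu₀⟩ (le_of_eq ?_)
  rw [inner_self_eq_norm_sq_to_K, norm_pow, RCLike.norm_ofReal, abs_norm]
  field_simp [norm_ne_zero_iff.2 hu]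

namespace ContinuousLinearMap.IsPositive

variable {H : Type*} [NormedAddCommGroup H] [InnerProductSpace ℂ H] [CompleteSpace H]
  {A : H →L[ℂ] H}

theorem exists_inner_apply_eq_inner_map_map (hA : A.IsPositive) :
    ∃ S : H →L[ℂ] H, ∀ x y, ⟪A x, y⟫ = ⟪S x, S y⟫ := by
  obtain ⟨S, rfl⟩ := CStarAlgebra.nonneg_iff_eq_star_mul_self.1 ((nonneg_iff_isPositive A).2 hA)
  exact ⟨S, fun x y ↦ by rw [mul_apply_eq_comp, star_eq_adjoint, adjoint_inner_left]⟩

theorem iSup_norm_inner_sq_div_re_inner (hA : A.IsPositive) (u : H) :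
    ⨆ g : {g : H // g ≠ 0}, ‖⟪A g, u⟫‖ ^ 2 / (⟪A g, g⟫).re = (⟪A u, u⟫).re := by
  obtain ⟨S, hS⟩ := hA.exists_inner_apply_eq_inner_map_map
  simp only [hS, ← RCLike.re_to_complex, inner_self_eq_norm_sq]
  exact (S : H →ₗ[ℂ] H).iSup_norm_inner_sq_div_norm_sq u

end ContinuousLinearMap.IsPositive

/-- **Variational formula for the Green function** (abstract form).
If `A` is a bounded self-adjoint coercive operator on a complex Hilbert space, then `A`
is invertible and `Re⟨A⁻¹ω, ω⟩ = sup_{g ≠ 0} |⟨g, ω⟩|² / Re⟨Ag, g⟩` for every `ω`. -/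
theorem green_variational_formula
    {H : Type*} [NormedAddCommGroup H] [InnerProductSpace ℂ H] [CompleteSpace H]
    (A : H →L[ℂ] H) (hA : IsSelfAdjoint A)
    (hcoercive : ∃ ε : ℝ, 0 < ε ∧ ∀ g : H, ε * ‖g‖ ^ 2 ≤ (⟪A g, g⟫).re) :
    ∃ B : H →L[ℂ] H, A.comp B = ContinuousLinearMap.id ℂ H ∧
      B.comp A = ContinuousLinearMap.id ℂ H ∧
      ∀ ω : H, (⟪B ω, ω⟫).re
        = ⨆ g : {g : H // g ≠ 0}, ‖⟪(g : H), ω⟫‖ ^ 2 / (⟪A (g : H), (g : H)⟫).re := by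
  obtain ⟨ε, hε, hco⟩ := hcoercive
  have hpos : A.IsPositive :=
    A.isPositive_def'.2 ⟨hA, fun g ↦ (by positivity : 0 ≤ ε * ‖g‖ ^ 2).trans (hco g)⟩
  have hunit : IsUnit A := by
    refine A.isUnit_of_forall_le_norm_inner_map (c := ⟨ε, hε.le⟩) hε fun g ↦ ?_
    rw [mul_comm]
    exact (hco g).trans (Complex.re_le_norm _)
  refine ⟨↑hunit.unit⁻¹, hunit.mul_val_inv, hunit.val_inv_mul, fun ω ↦ ?_⟩
  set u := (↑hunit.unit⁻¹ : H →L[ℂ] H) ω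
  have hω : ω = A u := (DFunLike.congr_fun hunit.mul_val_inv ω).symm
  simp only [hω, ← hpos.inner_left_eq_inner_right, hpos.iSup_norm_inner_sq_div_re_inner]
end

section
/- Let N, m ≥ 1 be integers with 2m > N, let Ω ⊆ ℝ^N be open and bounded, and for multi-indices α, β with |α|, |β| ≤ m let a_{α,β} : Ω → ℂ be measurable with |a_{α,β}| ≤ M almost everywhere. Define Q(g) := Σ_{|α|≤m, |β|≤m} ∫_Ω a_{α,β}(y) D^β g(y) conj(D^α g(y)) dy for g ∈ C_c^∞(Ω), and assume Re Q(g) ≥ 0 for every g ∈ C_c^∞(Ω). Let ψ : ℝ^N → ℂ be smooth with closed support contained in the open unit ball and ψ(0) = 1. Then there is a constant c > 0, depending only on ψ, M, m and N, such that for every x ∈ Ω, every t > 0 and every r with 0 < r ≤ min(d(x), 1), where d(x) := dist(x, Ωᶜ): sup over nonzero g ∈ C_c^∞(Ω) of |g(x)|² / (t · Re Q(g) + ‖g‖₂²) ≥ c / (t r^{N−2m} + r^N). -/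
open MeasureTheory

/-- The partial derivative `∂/∂yᵢ` of a function on `ℝ^N`. -/
noncomputable def pderiv' {N : ℕ} (i : Fin N)
    (f : EuclideanSpace ℝ (Fin N) → ℂ) : EuclideanSpace ℝ (Fin N) → ℂ :=
  fun y => fderiv ℝ f y (EuclideanSpace.single i 1)

/-- The multi-index partial derivative `D^α = ∂^{|α|}/∂y₁^{α₁}⋯∂y_N^{α_N}`. -/
noncomputable def mderiv {N : ℕ} (α : Fin N → ℕ)
    (f : EuclideanSpace ℝ (Fin N) → ℂ) : EuclideanSpace ℝ (Fin N) → ℂ :=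
  (List.finRange N).foldr (fun i g => (pderiv' i)^[α i] g) f

/-- The finite set of multi-indices `α` with `|α| ≤ m`, encoded with entries in
`Fin (m+1)` (any multi-index of total degree `≤ m` has all entries `≤ m`). -/
noncomputable def multiIndices (N m : ℕ) : Finset (Fin N → Fin (m + 1)) :=
  Finset.univ.filter (fun α => (∑ i, (α i : ℕ)) ≤ m)

/-- The quadratic form `Q(g) = Σ_{|α|≤m,|β|≤m} ∫_Ω a_{αβ} D^β g conj(D^α g)`. -/
noncomputable def quadForm {N : ℕ} (m : ℕ) (Ω : Set (EuclideanSpace ℝ (Fin N)))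
    (a : (Fin N → ℕ) → (Fin N → ℕ) → EuclideanSpace ℝ (Fin N) → ℂ)
    (g : EuclideanSpace ℝ (Fin N) → ℂ) : ℂ :=
  ∑ α ∈ multiIndices N m, ∑ β ∈ multiIndices N m,
    ∫ y in Ω, a (fun i => (α i : ℕ)) (fun i => (β i : ℕ)) y
      * mderiv (fun i => (β i : ℕ)) g y
      * (starRingEnd ℂ) (mderiv (fun i => (α i : ℕ)) g y)

/-- `g` is a test function for `Ω`, i.e. `g ∈ C_c^∞(Ω)`. -/
def IsTestFun {N : ℕ} (Ω : Set (EuclideanSpace ℝ (Fin N)))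
    (g : EuclideanSpace ℝ (Fin N) → ℂ) : Prop :=
  ContDiff ℝ (⊤ : ℕ∞) g ∧ HasCompactSupport g ∧ tsupport g ⊆ Ω


section aux
variable {N : ℕ}
local notation "E" => EuclideanSpace ℝ (Fin N)

lemma contDiff_pderiv' (i : Fin N) {f : E → ℂ} (hf : ContDiff ℝ (⊤ : ℕ∞) f) :
    ContDiff ℝ (⊤ : ℕ∞) (pderiv' i f) := by
  have : pderiv' i f = fun y =>
      (ContinuousLinearMap.apply ℝ ℂ (EuclideanSpace.single i (1:ℝ))) (fderiv ℝ f y) := rfl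
  rw [this]
  exact (ContinuousLinearMap.apply ℝ ℂ _).contDiff.comp (hf.fderiv_right (m := ((⊤ : ℕ∞) : WithTop ℕ∞)) (by exact_mod_cast le_top))

lemma tsupport_pderiv' (i : Fin N) {f : E → ℂ} :
    tsupport (pderiv' i f) ⊆ tsupport f := by
  refine closure_minimal ?_ (isClosed_tsupport f)
  intro y hy
  have : fderiv ℝ f y ≠ 0 := by
    intro h0; apply hy; simp [pderiv', h0]
  exact support_fderiv_subset ℝ this

lemma pderiv'_const_smul (i : Fin N) {f : E → ℂ} (hf : Differentiable ℝ f) (c : ℝ) :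
    pderiv' i (fun y => c • f y) = fun y => c • pderiv' i f y := by
  funext y
  simp only [pderiv']
  rw [fderiv_fun_const_smul (hf y) c]
  simp

lemma pderiv'_comp_scale (i : Fin N) {f : E → ℂ} (hf : Differentiable ℝ f)
    {r : ℝ} (hr : r ≠ 0) (x : E) :
    pderiv' i (fun y => f (r⁻¹ • (y - x))) =
      fun y => r⁻¹ • pderiv' i f (r⁻¹ • (y - x)) := by
  funext y
  have hA : HasFDerivAt (fun y : E => r⁻¹ • (y - x))
      (r⁻¹ • ContinuousLinearMap.id ℝ E) y := by
    exact ((hasFDerivAt_id y).sub_const x).const_smul r⁻¹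
  have hfd : HasFDerivAt f (fderiv ℝ f (r⁻¹ • (y - x))) (r⁻¹ • (y - x)) :=
    (hf _).hasFDerivAt
  have hcomp := hfd.comp y hA
  have heq : fderiv ℝ (fun y => f (r⁻¹ • (y - x))) y
      = (fderiv ℝ f (r⁻¹ • (y - x))).comp (r⁻¹ • ContinuousLinearMap.id ℝ E) :=
    hcomp.fderiv
  simp only [pderiv', heq, ContinuousLinearMap.coe_comp', Function.comp_apply,
    ContinuousLinearMap.smul_apply, ContinuousLinearMap.coe_id', id_eq, _root_.map_smul]


lemma contDiff_iter_pderiv' (i : Fin N) (k : ℕ) {f : E → ℂ} (hf : ContDiff ℝ (⊤ : ℕ∞) f) :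
    ContDiff ℝ (⊤ : ℕ∞) ((pderiv' i)^[k] f) := by
  induction k generalizing f with
  | zero => simpa using hf
  | succ k ih =>
    rw [Function.iterate_succ_apply]
    exact ih (contDiff_pderiv' i hf)

lemma tsupport_iter_pderiv' (i : Fin N) (k : ℕ) {f : E → ℂ} :
    tsupport ((pderiv' i)^[k] f) ⊆ tsupport f := by
  induction k generalizing f with
  | zero => simp
  | succ k ih =>
    rw [Function.iterate_succ_apply]
    exact (ih (f := pderiv' i f)).trans (tsupport_pderiv' i)

lemma iter_pderiv'_smul (i : Fin N) (k : ℕ) {f : E → ℂ} (hf : ContDiff ℝ (⊤ : ℕ∞) f) (c : ℝ) :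
    (pderiv' i)^[k] (fun y => c • f y) = fun y => c • (pderiv' i)^[k] f y := by
  induction k generalizing f with
  | zero => simp
  | succ k ih =>
    rw [Function.iterate_succ_apply, Function.iterate_succ_apply,
      pderiv'_const_smul i (hf.differentiable (by simp)) c]
    exact ih (contDiff_pderiv' i hf)

lemma iter_pderiv'_comp_scale (i : Fin N) (k : ℕ) {f : E → ℂ} (hf : ContDiff ℝ (⊤ : ℕ∞) f)
    {r : ℝ} (hr : r ≠ 0) (x : E) :
    (pderiv' i)^[k] (fun y => f (r⁻¹ • (y - x))) =
      fun y => (r⁻¹ ^ k : ℝ) • (pderiv' i)^[k] f (r⁻¹ • (y - x)) := by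
  induction k generalizing f with
  | zero => simp
  | succ k ih =>
    have hA : ContDiff ℝ (⊤ : ℕ∞) (fun y : E => r⁻¹ • (y - x)) :=
      (contDiff_id.sub contDiff_const).const_smul r⁻¹
    have hcomp : ContDiff ℝ (⊤ : ℕ∞) (fun y : E => pderiv' i f (r⁻¹ • (y - x))) :=
      (contDiff_pderiv' i hf).comp hA
    rw [Function.iterate_succ_apply,
      pderiv'_comp_scale i (hf.differentiable (by simp)) hr x,
      iter_pderiv'_smul i k (f := fun y : E => pderiv' i f (r⁻¹ • (y - x))) hcomp r⁻¹,
      ih (contDiff_pderiv' i hf)]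
    funext y
    rw [Function.iterate_succ_apply]
    simp only [smul_smul, pow_succ, Complex.real_smul, Complex.ofReal_mul, Complex.ofReal_pow,
      Complex.ofReal_inv]
    ring

lemma contDiff_foldr (l : List (Fin N)) (α : Fin N → ℕ) {f : E → ℂ}
    (hf : ContDiff ℝ (⊤ : ℕ∞) f) :
    ContDiff ℝ (⊤ : ℕ∞) (l.foldr (fun i g => (pderiv' i)^[α i] g) f) := by
  induction l with
  | nil => simpa using hf
  | cons i l ih => exact contDiff_iter_pderiv' i (α i) ih

lemma tsupport_foldr (l : List (Fin N)) (α : Fin N → ℕ) {f : E → ℂ} :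
    tsupport (l.foldr (fun i g => (pderiv' i)^[α i] g) f) ⊆ tsupport f := by
  induction l with
  | nil => simp
  | cons i l ih => exact (tsupport_iter_pderiv' i (α i)).trans ih

lemma foldr_comp_scale (l : List (Fin N)) (α : Fin N → ℕ) {f : E → ℂ}
    (hf : ContDiff ℝ (⊤ : ℕ∞) f) {r : ℝ} (hr : r ≠ 0) (x : E) :
    l.foldr (fun i g => (pderiv' i)^[α i] g) (fun y => f (r⁻¹ • (y - x))) =
      fun y => ((r⁻¹ ^ ((l.map α).sum)) : ℝ) •
        l.foldr (fun i g => (pderiv' i)^[α i] g) f (r⁻¹ • (y - x)) := by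
  induction l with
  | nil => simp
  | cons i l ih =>
    simp only [List.foldr_cons, ih, List.map_cons, List.sum_cons]
    have hA : ContDiff ℝ (⊤ : ℕ∞) (fun y : E => r⁻¹ • (y - x)) :=
      (contDiff_id.sub contDiff_const).const_smul r⁻¹
    have hcomp : ContDiff ℝ (⊤ : ℕ∞)
        (fun y : E => l.foldr (fun i g => (pderiv' i)^[α i] g) f (r⁻¹ • (y - x))) :=
      (contDiff_foldr l α hf).comp hA
    rw [iter_pderiv'_smul i (α i)
        (f := fun y : E => l.foldr (fun j g => (pderiv' j)^[α j] g) f (r⁻¹ • (y - x))) hcomp _,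
      iter_pderiv'_comp_scale i (α i) (contDiff_foldr l α hf) hr x]
    funext y
    simp only [smul_smul, pow_add, Complex.real_smul, Complex.ofReal_mul, Complex.ofReal_pow,
      Complex.ofReal_inv]
    ring

lemma mderiv_contDiff (α : Fin N → ℕ) {f : E → ℂ} (hf : ContDiff ℝ (⊤ : ℕ∞) f) :
    ContDiff ℝ (⊤ : ℕ∞) (mderiv α f) := contDiff_foldr _ α hf

lemma tsupport_mderiv (α : Fin N → ℕ) {f : E → ℂ} :
    tsupport (mderiv α f) ⊆ tsupport f := tsupport_foldr _ α

lemma mderiv_comp_scale (α : Fin N → ℕ) {f : E → ℂ} (hf : ContDiff ℝ (⊤ : ℕ∞) f)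
    {r : ℝ} (hr : r ≠ 0) (x : E) :
    mderiv α (fun y => f (r⁻¹ • (y - x))) =
      fun y => ((r⁻¹ ^ (∑ j, α j)) : ℝ) • mderiv α f (r⁻¹ • (y - x)) := by
  rw [mderiv, foldr_comp_scale _ α hf hr x, Fin.sum_univ_def]
  rfl

lemma mderiv_zero {f : E → ℂ} : mderiv (fun _ => 0) f = f := by
  rw [mderiv]
  induction (List.finRange N) with
  | nil => rfl
  | cons i l ih => simpa using ih

end aux
set_option maxHeartbeats 1000000 in
/-- **Lower bound for the Green-type quantity**
`G_t(x,x) = sup_{0 ≠ g ∈ C_c^∞(Ω)} |g(x)|²/(t·Re Q(g) + ‖g‖₂²) ≥ c/(t r^{N−2m} + r^N)`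
for all `x ∈ Ω`, `t > 0` and `0 < r ≤ min(d(x),1)`; the supremum is witnessed by an
explicit test function. -/
theorem green_lower_bound
    (N m : ℕ) (hN : 1 ≤ N) (hm : 1 ≤ m) (h2m : N < 2 * m)
    (Ω : Set (EuclideanSpace ℝ (Fin N))) (hΩo : IsOpen Ω)
    (hΩb : Bornology.IsBounded Ω)
    (M : ℝ) (hM : 0 < M)
    (a : (Fin N → ℕ) → (Fin N → ℕ) → EuclideanSpace ℝ (Fin N) → ℂ)
    (ha_meas : ∀ α β : Fin N → ℕ, Measurable (a α β))
    (ha_bd : ∀ α β : Fin N → ℕ, ∀ᵐ y ∂(volume.restrict Ω), ‖a α β y‖ ≤ M)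
    (hQpos : ∀ g : EuclideanSpace ℝ (Fin N) → ℂ, IsTestFun Ω g →
      0 ≤ (quadForm m Ω a g).re)
    (ψ : EuclideanSpace ℝ (Fin N) → ℂ) (hψ : ContDiff ℝ (⊤ : ℕ∞) ψ)
    (hψsupp : tsupport ψ ⊆ Metric.ball (0 : EuclideanSpace ℝ (Fin N)) 1)
    (hψ0 : ψ 0 = 1) :
    ∃ c : ℝ, 0 < c ∧
      ∀ x ∈ Ω, ∀ t : ℝ, 0 < t → ∀ r : ℝ, 0 < r → r ≤ min (Metric.infDist x Ωᶜ) 1 →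
        ∃ g : EuclideanSpace ℝ (Fin N) → ℂ, IsTestFun Ω g ∧ g ≠ 0 ∧
          c / (t * r ^ ((N : ℤ) - 2 * m) + r ^ (N : ℤ))
            ≤ ‖g x‖ ^ 2 / (t * (quadForm m Ω a g).re + ∫ y in Ω, ‖g y‖ ^ 2) := by
  classical
  have hψc : HasCompactSupport ψ :=
    (isCompact_closedBall (0 : EuclideanSpace ℝ (Fin N)) 1).of_isClosed_subset
      (isClosed_tsupport ψ) (hψsupp.trans Metric.ball_subset_closedBall)
  -- uniform bounds for all relevant derivatives of ψ
  have hex : ∀ α : Fin N → Fin (m + 1),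
      ∃ C, ∀ z, ‖mderiv (fun i => (α i : ℕ)) ψ z‖ ≤ C := by
    intro α
    have hc : HasCompactSupport (mderiv (fun i => (α i : ℕ)) ψ) :=
      hψc.of_isClosed_subset (isClosed_tsupport _) (tsupport_mderiv _)
    exact hc.exists_bound_of_continuous (mderiv_contDiff _ hψ).continuous
  set F : (Fin N → Fin (m + 1)) → ℝ := fun α => Classical.choose (hex α) with hFdef
  have hF : ∀ α : Fin N → Fin (m + 1), ∀ z, ‖mderiv (fun i => (α i : ℕ)) ψ z‖ ≤ F α :=
    fun α => Classical.choose_spec (hex α)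
  have hF0 : ∀ α, 0 ≤ F α := fun α => le_trans (norm_nonneg _) (hF α 0)
  set K : ℝ := 1 + ∑ α ∈ multiIndices N m, F α with hKdef
  have hK1 : 1 ≤ K := le_add_of_nonneg_right (Finset.sum_nonneg fun α _ => hF0 α)
  have hK0 : (0:ℝ) < K := lt_of_lt_of_le one_pos hK1
  have hKb : ∀ α ∈ multiIndices N m, ∀ z, ‖mderiv (fun i => (α i : ℕ)) ψ z‖ ≤ K := by
    intro α hα z
    refine (hF α z).trans ?_
    have h1 := Finset.single_le_sum (fun a _ => hF0 a) hα
    simp only [hKdef]; linarith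
  -- nontriviality and the volume of the unit ball
  haveI : Nontrivial (EuclideanSpace ℝ (Fin N)) := by
    refine ⟨0, EuclideanSpace.single (⟨0, hN⟩ : Fin N) (1:ℝ), fun h => ?_⟩
    have := congrArg (fun v : EuclideanSpace ℝ (Fin N) => v (⟨0, hN⟩ : Fin N)) h
    simp [EuclideanSpace.single_apply] at this
  set V : ℝ := (volume (Metric.ball (0 : EuclideanSpace ℝ (Fin N)) 1)).toReal with hVdef
  have hV0 : 0 < V :=
    ENNReal.toReal_pos (Metric.measure_ball_pos volume 0 one_pos).ne' measure_ball_lt_top.ne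
  set n : ℕ := (multiIndices N m).card with hndef
  set C : ℝ := (n:ℝ)^2 * M * K^2 * V + K^2 * V with hCdef
  have hKV : 0 < K^2 * V := mul_pos (pow_pos hK0 2) hV0
  have hC0 : 0 < C := by
    have h1 : 0 ≤ (n:ℝ)^2 * M * K^2 * V := by positivity
    linarith
  refine ⟨1 / C, by positivity, fun x hx t ht r hr0 hrle => ?_⟩
  have hr1 : r ≤ 1 := hrle.trans (min_le_right _ _)
  have hrd : r ≤ Metric.infDist x Ωᶜ := hrle.trans (min_le_left _ _)
  set g : EuclideanSpace ℝ (Fin N) → ℂ := fun y => ψ (r⁻¹ • (y - x)) with hgdef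
  have hball : Metric.ball x r ⊆ Ω := by
    intro y hy
    by_contra hyc
    have h1 : Metric.infDist x Ωᶜ ≤ dist x y := Metric.infDist_le_dist_of_mem hyc
    rw [Metric.mem_ball, dist_comm] at hy
    linarith
  have hcd : ContDiff ℝ (⊤ : ℕ∞) g :=
    hψ.comp ((contDiff_id.sub contDiff_const).const_smul r⁻¹)
  have hgsupp : tsupport g ⊆ Metric.ball x r := by
    have h1 : tsupport g ⊆ (fun y => r⁻¹ • (y - x)) ⁻¹' (tsupport ψ) := by
      refine closure_minimal (fun y hy => subset_closure ?_)
        (IsClosed.preimage (by fun_prop) (isClosed_tsupport ψ))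
      exact hy
    intro y hy
    have h2 := hψsupp (h1 hy)
    rw [mem_ball_zero_iff, norm_smul, norm_inv, Real.norm_eq_abs,
      abs_of_pos hr0] at h2
    rw [Metric.mem_ball, dist_eq_norm]
    calc ‖y - x‖ = r * (r⁻¹ * ‖y - x‖) := by field_simp
    _ < r * 1 := mul_lt_mul_of_pos_left h2 hr0
    _ = r := mul_one r
  have htest : IsTestFun Ω g := by
    refine ⟨hcd, ?_, hgsupp.trans hball⟩
    exact (isCompact_closedBall x r).of_isClosed_subset (isClosed_tsupport g)
      (hgsupp.trans Metric.ball_subset_closedBall)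
  have hgx : g x = 1 := by simp [hgdef, hψ0]
  have hgne : g ≠ 0 := by
    intro h; rw [h] at hgx; simp at hgx
  -- scaling of derivatives
  have hscale : ∀ γ : Fin N → ℕ, mderiv γ g =
      fun y => ((r⁻¹ ^ (∑ j, γ j)) : ℝ) • mderiv γ ψ (r⁻¹ • (y - x)) :=
    fun γ => mderiv_comp_scale γ hψ hr0.ne' x
  have h1r : (1:ℝ) ≤ r⁻¹ := by
    rw [le_inv_comm₀ one_pos hr0]; simpa using hr1
  -- uniform bound on derivatives of g
  have hDb : ∀ γ ∈ multiIndices N m, ∀ y,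
      ‖mderiv (fun i => (γ i : ℕ)) g y‖ ≤ r⁻¹ ^ m * K := by
    intro γ hγ y
    rw [hscale _]
    have hs : (∑ j, ((γ j : ℕ))) ≤ m := (Finset.mem_filter.mp hγ).2
    have h2 : r⁻¹ ^ (∑ j, ((γ j : ℕ))) ≤ r⁻¹ ^ m :=
      pow_le_pow_right₀ h1r hs
    have h3 : (0:ℝ) ≤ r⁻¹ ^ (∑ j, ((γ j : ℕ))) := by positivity
    calc ‖((r⁻¹ ^ (∑ j, ((γ j : ℕ)))) : ℝ) • mderiv (fun i => (γ i : ℕ)) ψ (r⁻¹ • (y - x))‖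
        = r⁻¹ ^ (∑ j, ((γ j : ℕ))) * ‖mderiv (fun i => (γ i : ℕ)) ψ (r⁻¹ • (y - x))‖ := by
          rw [norm_smul, Real.norm_eq_abs, abs_of_nonneg h3]
      _ ≤ r⁻¹ ^ m * K :=
          mul_le_mul h2 (hKb γ hγ _) (norm_nonneg _) (by positivity)
  -- derivatives of g vanish off the ball
  have hsupp0 : ∀ γ : Fin N → ℕ, ∀ y ∉ Metric.ball x r, mderiv γ g y = 0 := by
    intro γ y hy
    rw [hscale γ]
    have hout : r⁻¹ • (y - x) ∉ tsupport ψ := by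
      intro hmem
      have h2 := hψsupp hmem
      rw [mem_ball_zero_iff, norm_smul, norm_inv, Real.norm_eq_abs, abs_of_pos hr0] at h2
      rw [Metric.mem_ball, dist_eq_norm] at hy
      push_neg at hy
      have : r⁻¹ * r ≤ r⁻¹ * ‖y - x‖ :=
        mul_le_mul_of_nonneg_left hy (by positivity)
      rw [inv_mul_cancel₀ hr0.ne'] at this
      linarith
    have : mderiv γ ψ (r⁻¹ • (y - x)) = 0 :=
      image_eq_zero_of_notMem_tsupport (fun h => hout (tsupport_mderiv γ h))
    simp [this]
  -- volume of the ball
  have hvol : (volume (Metric.ball x r)).toReal = r ^ N * V := by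
    rw [hVdef, MeasureTheory.Measure.addHaar_ball volume x hr0.le,
      finrank_euclideanSpace_fin, ENNReal.toReal_mul,
      ENNReal.toReal_ofReal (by positivity)]
  -- bound for each integral in the quadratic form
  set X : ℝ := r⁻¹ ^ m * K with hXdef
  have hX0 : 0 < X := by positivity
  set B : ℝ := M * X ^ 2 with hBdef
  have hB0 : 0 ≤ B := by positivity
  have hμball : (volume.restrict Ω) (Metric.ball x r) < ⊤ :=
    lt_of_le_of_lt (Measure.restrict_apply_le _ _) measure_ball_lt_top
  have hindint : ∀ b : ℝ,
      Integrable ((Metric.ball x r).indicator (fun _ => b)) (volume.restrict Ω) := by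
    intro b
    rw [integrable_indicator_iff measurableSet_ball]
    exact integrableOn_const hμball.ne
  have hindle : ∀ b : ℝ, 0 ≤ b →
      (∫ y in Ω, (Metric.ball x r).indicator (fun _ => b) y) ≤ b * (r ^ N * V) := by
    intro b hb
    rw [integral_indicator measurableSet_ball, setIntegral_const, smul_eq_mul]
    have h2 : ((volume.restrict Ω) (Metric.ball x r)).toReal
        ≤ (volume (Metric.ball x r)).toReal :=
      ENNReal.toReal_mono measure_ball_lt_top.ne (Measure.restrict_apply_le _ _)
    rw [mul_comm]
    exact mul_le_mul_of_nonneg_left (h2.trans_eq hvol) hb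
  have hIb : ∀ γ ∈ multiIndices N m, ∀ δ ∈ multiIndices N m,
      ‖∫ y in Ω, a (fun i => (γ i : ℕ)) (fun i => (δ i : ℕ)) y
        * mderiv (fun i => (δ i : ℕ)) g y
        * (starRingEnd ℂ) (mderiv (fun i => (γ i : ℕ)) g y)‖ ≤ B * (r ^ N * V) := by
    intro γ hγ δ hδ
    refine le_trans (norm_integral_le_of_norm_le (hindint B) ?_) (hindle B hB0)
    filter_upwards [ha_bd (fun i => (γ i : ℕ)) (fun i => (δ i : ℕ))] with y hy
    by_cases hyb : y ∈ Metric.ball x r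
    · rw [Set.indicator_of_mem hyb]
      rw [norm_mul, norm_mul, RCLike.norm_conj]
      have hδb := hDb δ hδ y
      have hγb := hDb γ hγ y
      have h1 : ‖a (fun i => (γ i : ℕ)) (fun i => (δ i : ℕ)) y‖
            * ‖mderiv (fun i => (δ i : ℕ)) g y‖
            * ‖mderiv (fun i => (γ i : ℕ)) g y‖ ≤ M * X * X :=
        mul_le_mul (mul_le_mul hy hδb (norm_nonneg _) hM.le) hγb (norm_nonneg _)
          (by positivity)
      refine h1.trans (le_of_eq ?_)
      rw [hBdef]; ring
    · rw [Set.indicator_of_notMem hyb, hsupp0 _ y hyb]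
      simp
  -- bound for the quadratic form
  have hQb : (quadForm m Ω a g).re ≤ (n:ℝ)^2 * (B * (r ^ N * V)) := by
    refine le_trans (Complex.re_le_norm _) ?_
    rw [quadForm]
    refine le_trans (norm_sum_le _ _) ?_
    refine le_trans (Finset.sum_le_sum (fun γ hγ =>
      (norm_sum_le _ _).trans (le_trans
        (Finset.sum_le_sum (fun δ hδ => hIb γ hγ δ hδ))
        (le_of_eq (by rw [Finset.sum_const, nsmul_eq_mul]))))) ?_
    rw [Finset.sum_const, nsmul_eq_mul, ← hndef]
    refine le_of_eq ?_
    ring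
  -- bound for the L² norm
  have hgb : ∀ y : EuclideanSpace ℝ (Fin N), ‖g y‖ ≤ K := by
    intro y
    have h0mem : (fun _ : Fin N => (0 : Fin (m+1))) ∈ multiIndices N m := by
      simp [multiIndices]
    have h2 := hKb _ h0mem (r⁻¹ • (y - x))
    have hz : (fun i : Fin N => (((fun _ : Fin N => (0 : Fin (m+1))) i : ℕ))) =
        (fun _ : Fin N => (0:ℕ)) := by funext i; simp
    rw [hz, mderiv_zero] at h2
    exact h2
  have hgout : ∀ y ∉ Metric.ball x r, g y = 0 := by
    intro y hy
    have h2 := hsupp0 (fun _ => 0) y hy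
    rwa [mderiv_zero] at h2
  have hL2 : (∫ y in Ω, ‖g y‖^2) ≤ K^2 * (r ^ N * V) := by
    refine le_trans (integral_mono_of_nonneg
      (Filter.Eventually.of_forall fun y => by positivity) (hindint (K^2))
      (Filter.Eventually.of_forall ?_)) (hindle _ (by positivity))
    intro y
    by_cases hyb : y ∈ Metric.ball x r
    · rw [Set.indicator_of_mem hyb]
      exact pow_le_pow_left₀ (norm_nonneg _) (hgb y) 2
    · simp only [Set.indicator_of_notMem hyb]
      simp [hgout y hyb]
  -- positivity of the L² norm
  have hL2pos : 0 < ∫ y in Ω, ‖g y‖^2 := by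
    have hcont : Continuous fun y => ‖g y‖^2 := (hcd.continuous.norm).pow 2
    have hcs : HasCompactSupport fun y => ‖g y‖^2 :=
      htest.2.1.comp_left (g := fun z : ℂ => ‖z‖^2) (by simp)
    have hint : IntegrableOn (fun y => ‖g y‖^2) Ω volume :=
      (hcont.integrable_of_hasCompactSupport hcs).integrableOn
    rw [setIntegral_pos_iff_support_of_nonneg_ae
      (Filter.Eventually.of_forall fun y => by positivity) hint]
    have hUopen : IsOpen ({y | g y ≠ 0} ∩ Ω) :=
      (isOpen_ne_fun hcd.continuous continuous_const).inter hΩo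
    refine lt_of_lt_of_le (hUopen.measure_pos volume ⟨x, ?_, hx⟩) (measure_mono ?_)
    · simp only [Set.mem_setOf_eq, hgx]; exact one_ne_zero
    · rintro y ⟨h1, h2⟩
      refine ⟨?_, h2⟩
      simp only [Function.mem_support]
      exact pow_ne_zero _ (norm_ne_zero_iff.mpr h1)
  -- final arithmetic
  have hReQ0 : 0 ≤ (quadForm m Ω a g).re := hQpos g htest
  have hrz1 : (r:ℝ) ^ (N:ℤ) = r ^ N := zpow_natCast r N
  have hrz2 : (r:ℝ) ^ ((N:ℤ) - 2*m) = r⁻¹ ^ (2*m) * r ^ N := by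
    rw [zpow_sub₀ hr0.ne', show ((2:ℤ) * m) = ((2*m : ℕ) : ℤ) by push_cast; ring,
      zpow_natCast, zpow_natCast, inv_pow, div_eq_mul_inv, mul_comm]
  have hrp1 : (0:ℝ) < r ^ ((N:ℤ) - 2*m) := zpow_pos hr0 _
  have hrp2 : (0:ℝ) < r ^ (N:ℤ) := zpow_pos hr0 _
  have hD0 : (0:ℝ) < t * r ^ ((N:ℤ) - 2*m) + r ^ (N:ℤ) :=
    add_pos (mul_pos ht hrp1) hrp2
  have hkey : t * (quadForm m Ω a g).re + (∫ y in Ω, ‖g y‖^2)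
      ≤ C * (t * r ^ ((N:ℤ) - 2*m) + r ^ (N:ℤ)) := by
    have h1 : t * (quadForm m Ω a g).re ≤ t * ((n:ℝ)^2 * (B * (r^N * V))) :=
      mul_le_mul_of_nonneg_left hQb ht.le
    have hBe : (n:ℝ)^2 * (B * (r^N*V)) = ((n:ℝ)^2 * M * K^2 * V) * r ^ ((N:ℤ)-2*m) := by
      rw [hrz2, hBdef, hXdef]; ring
    have h2 : (∫ y in Ω, ‖g y‖^2) ≤ (K^2*V) * r ^ (N:ℤ) := by
      rw [hrz1]
      exact hL2.trans (le_of_eq (by ring))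
    have h3 : C * (t * r ^ ((N:ℤ) - 2*m) + r ^ (N:ℤ))
        = ((n:ℝ)^2 * M * K^2 * V) * (t * r ^ ((N:ℤ)-2*m))
          + ((n:ℝ)^2 * M * K^2 * V) * r ^ (N:ℤ)
          + (K^2*V) * (t * r ^ ((N:ℤ)-2*m)) + (K^2*V) * r ^ (N:ℤ) := by
      rw [hCdef]; ring
    have h4 : 0 ≤ ((n:ℝ)^2 * M * K^2 * V) := by positivity
    have h5 : 0 ≤ ((n:ℝ)^2 * M * K^2 * V) * r ^ (N:ℤ) := mul_nonneg h4 hrp2.le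
    have h6 : 0 ≤ (K^2*V) * (t * r ^ ((N:ℤ)-2*m)) :=
      mul_nonneg hKV.le (mul_nonneg ht.le hrp1.le)
    have h7 : t * ((n:ℝ)^2 * (B * (r^N * V)))
        = ((n:ℝ)^2 * M * K^2 * V) * (t * r ^ ((N:ℤ)-2*m)) := by
      rw [hBe]; ring
    rw [h7] at h1
    linarith
  refine ⟨g, htest, hgne, ?_⟩
  have hnum : ‖g x‖^2 = 1 := by rw [hgx]; norm_num
  rw [hnum]
  have hden0 : 0 < t * (quadForm m Ω a g).re + ∫ y in Ω, ‖g y‖^2 := by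
    have h8 := mul_nonneg ht.le hReQ0
    linarith
  rw [div_div]
  exact one_div_le_one_div_of_le hden0 hkey
end

section
/- For every A > 0, B > 0 and θ ∈ (0,1) there exists a constant c > 0 with the following property: for every T > 0 and every nonincreasing, log-convex function f : (0,∞) → (0,∞) satisfying f(t) ≤ A t^{−θ} for all 0 < t ≤ T and ∫₀^∞ e^{−s} f(Ts) ds ≥ B T^{−θ}, one has f(T) ≥ c T^{−θ}. -/
/-!
Split the Green integral at a small `δ`. On `(0, δ]` the upper bound `f(t) ≤ A t^{-θ}` contributes
at most `A δ^{1-θ}/(1-θ) · T^{-θ}`, which is `≤ (B/2) T^{-θ}` for `δ` small; on `(δ, ∞)` monotonicity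
bounds the integrand by `e^{-s} f(Tδ)`. Hence `f(Tδ) ≥ (B/2) T^{-θ}`. Log-convexity on the three points
`Tδ² < Tδ < T` gives `f(Tδ) ≤ f(Tδ²)^l f(T)^{1-l}` with `l = 1/(1+δ)`, and the upper bound at `Tδ²`
turns this into `f(T) ≥ c T^{-θ}`.
-/

open MeasureTheory Set Real

theorem exists_pos_le_one_rpow_le {p ε : ℝ} (hp : 0 < p) (hε : 0 < ε) :
    ∃ δ : ℝ, 0 < δ ∧ δ ≤ 1 ∧ δ ^ p ≤ ε := by
  refine ⟨min 1 (ε ^ p⁻¹), by positivity, min_le_left _ _, ?_⟩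
  calc min 1 (ε ^ p⁻¹) ^ p ≤ (ε ^ p⁻¹) ^ p := rpow_le_rpow (by positivity) (min_le_right _ _) hp.le
    _ = ε := rpow_inv_rpow hε.le hp.ne'

theorem integral_Ioc_zero_rpow_neg {δ θ : ℝ} (hδ : 0 ≤ δ) (hθ : θ < 1) :
    ∫ s in Ioc 0 δ, s ^ (-θ) = δ ^ (1 - θ) / (1 - θ) := by
  rw [← intervalIntegral.integral_of_le hδ, integral_rpow (Or.inl (by linarith)),
    zero_rpow (by linarith), neg_add_eq_sub, sub_zero]

theorem rpow_inv_mul_le_of_le_rpow_mul_rpow {l m M s x y z : ℝ} (hl0 : 0 ≤ l) (hl1 : l < 1)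
    (hm : 0 ≤ m) (hM : 0 < M) (hs : 0 < s) (hx : 0 ≤ x) (hz : 0 ≤ z)
    (hxM : x ≤ M * s) (hmy : m * s ≤ y) (hy : y ≤ x ^ l * z ^ (1 - l)) :
    (m / M ^ l) ^ (1 - l)⁻¹ * s ≤ z := by
  have hsl : 0 < s ^ l := rpow_pos_of_pos hs l
  have hML : 0 < M ^ l := rpow_pos_of_pos hM l
  have hmain : s ^ l * (m * s ^ (1 - l)) ≤ s ^ l * (z ^ (1 - l) * M ^ l) :=
    calc s ^ l * (m * s ^ (1 - l)) = m * s := by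
          rw [mul_left_comm, ← rpow_add hs, add_sub_cancel, rpow_one]
      _ ≤ x ^ l * z ^ (1 - l) := hmy.trans hy
      _ ≤ (M * s) ^ l * z ^ (1 - l) := by gcongr
      _ = s ^ l * (z ^ (1 - l) * M ^ l) := by rw [mul_rpow hM.le hs.le]; ring
  have hkey : m / M ^ l * s ^ (1 - l) ≤ z ^ (1 - l) := by
    rw [div_mul_eq_mul_div, div_le_iff₀ hML]
    exact le_of_mul_le_mul_left hmain hsl
  rwa [← rpow_le_rpow_iff (by positivity) hz (sub_pos.2 hl1),
    mul_rpow (by positivity) hs.le, rpow_inv_rpow (by positivity) (sub_pos.2 hl1).ne']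

theorem le_rpow_mul_rpow_of_logConvex {f : ℝ → ℝ}
    (hf : ∀ a b : ℝ, 0 < a → 0 < b → ∀ l : ℝ, 0 ≤ l → l ≤ 1 →
      f (l * a + (1 - l) * b) ≤ f a ^ l * f b ^ (1 - l))
    {t δ : ℝ} (ht : 0 < t) (hδ : 0 < δ) :
    f (t * δ) ≤ f (t * δ ^ 2) ^ (1 + δ)⁻¹ * f t ^ (1 - (1 + δ)⁻¹) := by
  have hl1 : (1 + δ)⁻¹ ≤ 1 := inv_le_one_of_one_le₀ (by linarith)
  have h := hf (t * δ ^ 2) t (by positivity) ht (1 + δ)⁻¹ (by positivity) hl1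
  rwa [show (1 + δ)⁻¹ * (t * δ ^ 2) + (1 - (1 + δ)⁻¹) * t = t * δ by field_simp; ring] at h

section GreenIntegral

variable {f : ℝ → ℝ} {A T δ θ : ℝ}

theorem setIntegral_Ioc_exp_neg_mul_comp_le (hT : 0 < T) (hδ : 0 < δ) (hθ : θ < 1)
    (hf_nonneg : ∀ t, 0 < t → 0 ≤ f t)
    (hf_le : ∀ t, 0 < t → t ≤ T * δ → f t ≤ A * t ^ (-θ))
    (hint : IntegrableOn (fun s => exp (-s) * f (T * s)) (Ioc 0 δ)) :
    ∫ s in Ioc 0 δ, exp (-s) * f (T * s) ≤ A * (δ ^ (1 - θ) / (1 - θ)) * T ^ (-θ) := by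
  have hrpow : IntegrableOn (fun s : ℝ => s ^ (-θ)) (Ioc 0 δ) := by
    rw [← intervalIntegrable_iff_integrableOn_Ioc_of_le hδ.le]
    exact intervalIntegral.intervalIntegrable_rpow' (by linarith)
  have hpointwise : ∀ s ∈ Ioc 0 δ, exp (-s) * f (T * s) ≤ A * T ^ (-θ) * s ^ (-θ) := by
    rintro s ⟨hs0, hsδ⟩
    have hTs : 0 < T * s := mul_pos hT hs0
    calc exp (-s) * f (T * s) ≤ f (T * s) :=
          mul_le_of_le_one_left (hf_nonneg _ hTs) (exp_le_one_iff.2 (by linarith))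
      _ ≤ A * (T * s) ^ (-θ) := hf_le _ hTs (by gcongr)
      _ = A * T ^ (-θ) * s ^ (-θ) := by rw [mul_rpow hT.le hs0.le, mul_assoc]
  calc ∫ s in Ioc 0 δ, exp (-s) * f (T * s) ≤ ∫ s in Ioc 0 δ, A * T ^ (-θ) * s ^ (-θ) :=
        setIntegral_mono_on hint (hrpow.const_mul _) measurableSet_Ioc hpointwise
    _ = A * (δ ^ (1 - θ) / (1 - θ)) * T ^ (-θ) := by
        rw [integral_const_mul, integral_Ioc_zero_rpow_neg hδ.le hθ]; ring

theorem setIntegral_Ioi_exp_neg_mul_comp_le (hT : 0 < T) (hδ : 0 < δ)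
    (hf_nonneg : ∀ t, 0 < t → 0 ≤ f t) (hf_anti : ∀ a b, 0 < a → a ≤ b → f b ≤ f a)
    (hint : IntegrableOn (fun s => exp (-s) * f (T * s)) (Ioi δ)) :
    ∫ s in Ioi δ, exp (-s) * f (T * s) ≤ f (T * δ) := by
  have hTδ : 0 < T * δ := mul_pos hT hδ
  have hpointwise : ∀ s ∈ Ioi δ, exp (-s) * f (T * s) ≤ exp (-s) * f (T * δ) := fun s hs =>
    mul_le_mul_of_nonneg_left (hf_anti _ _ hTδ (by gcongr; exact hs.le)) (exp_pos _).le
  calc ∫ s in Ioi δ, exp (-s) * f (T * s) ≤ ∫ s in Ioi δ, exp (-s) * f (T * δ) :=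
        setIntegral_mono_on hint ((integrableOn_exp_neg_Ioi δ).mul_const _) measurableSet_Ioi
          hpointwise
    _ = exp (-δ) * f (T * δ) := by rw [integral_mul_const, integral_exp_neg_Ioi]
    _ ≤ f (T * δ) := mul_le_of_le_one_left (hf_nonneg _ hTδ) (exp_le_one_iff.2 (by linarith))

theorem setIntegral_Ioi_zero_exp_neg_mul_comp_le (hT : 0 < T) (hδ : 0 < δ) (hθ : θ < 1)
    (hf_nonneg : ∀ t, 0 < t → 0 ≤ f t) (hf_anti : ∀ a b, 0 < a → a ≤ b → f b ≤ f a)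
    (hf_le : ∀ t, 0 < t → t ≤ T * δ → f t ≤ A * t ^ (-θ))
    (hint : IntegrableOn (fun s => exp (-s) * f (T * s)) (Ioi 0)) :
    ∫ s in Ioi 0, exp (-s) * f (T * s) ≤ A * (δ ^ (1 - θ) / (1 - θ)) * T ^ (-θ) + f (T * δ) := by
  rw [← Ioc_union_Ioi_eq_Ioi hδ.le, setIntegral_union Ioc_disjoint_Ioi_same measurableSet_Ioi
    (hint.mono_set Ioc_subset_Ioi_self) (hint.mono_set (Ioi_subset_Ioi hδ.le))]
  exact add_le_add
    (setIntegral_Ioc_exp_neg_mul_comp_le hT hδ hθ hf_nonneg hf_le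
      (hint.mono_set Ioc_subset_Ioi_self))
    (setIntegral_Ioi_exp_neg_mul_comp_le hT hδ hf_nonneg hf_anti
      (hint.mono_set (Ioi_subset_Ioi hδ.le)))

end GreenIntegral

theorem short_time_lower_bound_general
    (A B θ : ℝ) (hA : 0 < A) (hB : 0 < B) (hθ1 : θ < 1) :
    ∃ c : ℝ, 0 < c ∧
      ∀ (T : ℝ) (f : ℝ → ℝ), 0 < T →
        (∀ t : ℝ, 0 < t → 0 < f t) →
        (∀ a b : ℝ, 0 < a → a ≤ b → f b ≤ f a) →
        (∀ a b : ℝ, 0 < a → 0 < b → ∀ l : ℝ, 0 ≤ l → l ≤ 1 →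
          f (l * a + (1 - l) * b) ≤ f a ^ l * f b ^ (1 - l)) →
        (∀ t : ℝ, 0 < t → t ≤ T → f t ≤ A * t ^ (-θ)) →
        (B * T ^ (-θ) ≤ ∫ s in Set.Ioi (0 : ℝ), Real.exp (-s) * f (T * s)) →
        c * T ^ (-θ) ≤ f T := by
  have hθ : 0 < 1 - θ := sub_pos.2 hθ1
  obtain ⟨δ, hδ0, hδ1, hδθ⟩ :=
    exists_pos_le_one_rpow_le hθ (show 0 < B * (1 - θ) / (2 * A) by positivity)
  have hsmall : A * (δ ^ (1 - θ) / (1 - θ)) ≤ B / 2 := by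
    calc A * (δ ^ (1 - θ) / (1 - θ)) ≤ A * (B * (1 - θ) / (2 * A) / (1 - θ)) := by gcongr
      _ = B / 2 := by field_simp
  refine ⟨(B / 2 / (A * (δ ^ 2) ^ (-θ)) ^ (1 + δ)⁻¹) ^ (1 - (1 + δ)⁻¹)⁻¹, by positivity, ?_⟩
  intro T f hT hf_pos hf_anti hf_logConvex hf_le hG
  have hint : IntegrableOn (fun s => exp (-s) * f (T * s)) (Ioi 0) :=
    Integrable.of_integral_ne_zero ((lt_of_lt_of_le (by positivity) hG).ne')
  have hgreen := setIntegral_Ioi_zero_exp_neg_mul_comp_le hT hδ0 hθ1 (fun t ht => (hf_pos t ht).le)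
    hf_anti (fun t ht htδ => hf_le t ht (htδ.trans (mul_le_of_le_one_right hT.le hδ1))) hint
  have hnear : B / 2 * T ^ (-θ) ≤ f (T * δ) := by
    linarith [mul_le_mul_of_nonneg_right hsmall (rpow_pos_of_pos hT (-θ)).le]
  have hfar : f (T * δ ^ 2) ≤ A * (δ ^ 2) ^ (-θ) * T ^ (-θ) :=
    calc f (T * δ ^ 2) ≤ A * (T * δ ^ 2) ^ (-θ) :=
          hf_le _ (by positivity) (mul_le_of_le_one_right hT.le (pow_le_one₀ hδ0.le hδ1))
      _ = A * (δ ^ 2) ^ (-θ) * T ^ (-θ) := by rw [mul_rpow hT.le (by positivity)]; ring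
  exact rpow_inv_mul_le_of_le_rpow_mul_rpow (by positivity)
    (inv_lt_one_of_one_lt₀ (by linarith)) (by positivity) (by positivity) (rpow_pos_of_pos hT _)
    (hf_pos _ (by positivity)).le (hf_pos T hT).le hfar hnear
    (le_rpow_mul_rpow_of_logConvex hf_logConvex hT hδ0)

/-- **Short-time heat kernel lower bound** (abstract Tauberian form).
For every `A, B > 0` and `θ ∈ (0,1)` there is `c > 0` such that every positive,
nonincreasing, log-convex `f : (0,∞) → (0,∞)` with `f(t) ≤ A t^{−θ}` for `0 < t ≤ T`
and `∫₀^∞ e^{−s} f(Ts) ds ≥ B T^{−θ}` satisfies `f(T) ≥ c T^{−θ}`. -/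
theorem short_time_lower_bound
    (A B θ : ℝ) (hA : 0 < A) (hB : 0 < B) (hθ0 : 0 < θ) (hθ1 : θ < 1) :
    ∃ c : ℝ, 0 < c ∧
      ∀ (T : ℝ) (f : ℝ → ℝ), 0 < T →
        (∀ t : ℝ, 0 < t → 0 < f t) →
        (∀ a b : ℝ, 0 < a → a ≤ b → f b ≤ f a) →
        (∀ a b : ℝ, 0 < a → 0 < b → ∀ l : ℝ, 0 ≤ l → l ≤ 1 →
          f (l * a + (1 - l) * b) ≤ f a ^ l * f b ^ (1 - l)) →
        (∀ t : ℝ, 0 < t → t ≤ T → f t ≤ A * t ^ (-θ)) →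
        (B * T ^ (-θ) ≤ ∫ s in Set.Ioi (0 : ℝ), Real.exp (-s) * f (T * s)) →
        c * T ^ (-θ) ≤ f T :=
  short_time_lower_bound_general A B θ hA hB hθ1
end

section
/- For every A > 0, B > 0 and θ ∈ (0,1) there exist constants c > 0 and C > 0 with the following property: for every T > 0, every D with 0 < D ≤ T, and every nonincreasing, log-convex function f : (0,∞) → (0,∞) satisfying f(t) ≤ A t^{−θ} for all 0 < t ≤ T and ∫₀^∞ e^{−s} f(Ts) ds ≥ B D^{1−θ} T^{−1}, one has f(T) ≥ c T^{−θ} exp(−C T / D). -/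
/-!
Rescaling `t ↦ T t`, `f ↦ T ^ θ f` reduces to `T = 1`, with `d = D / T ≤ 1`. For small `δ` the
bound `f ≤ A t ^ (-θ)` caps the part of the Laplace integral over `(0, δ d)` at a third of its
assumed size, so two thirds of it lie beyond `a = δ d`; monotonicity then gives `f a ≳ d ^ (1 - θ)`,
while `f a ≤ A a ^ (-θ)`. Either `f 1` is already comparable to `d ^ (1 - θ)`, or log-convexity
keeps `f` below the exponential chord `f a * exp (-k (s - a))` on `[a, 1]`; the tail mass then
forces `f a / k ≳ d ^ (1 - θ)`, i.e. `k ≲ 1 / d`, and `f 1 = f a * exp (-k (1 - a))`.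
-/

open MeasureTheory Real Set

theorem exp_neg_div_le_rpow {d p : ℝ} (hd : 0 < d) (hp : 0 ≤ p) : exp (-p / d) ≤ d ^ p := by
  rw [rpow_def_of_pos hd, exp_le_exp, neg_div, ← mul_one_div, ← mul_neg, mul_comm p]
  refine mul_le_mul_of_nonneg_right ?_ hp
  linarith [one_sub_inv_le_log_of_pos hd, one_div d]

theorem exists_pos_lt_one_mul_rpow_div_le {A B θ : ℝ} (hB : 0 < B) (hθ : θ < 1) :
    ∃ δ, 0 < δ ∧ δ < 1 ∧ A * δ ^ (1 - θ) / (1 - θ) ≤ B := by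
  have hlim : Filter.Tendsto (fun δ : ℝ => A * δ ^ (1 - θ) / (1 - θ)) (nhdsWithin 0 (Ioi 0))
      (nhds 0) := by
    have := ((continuousAt_rpow_const 0 (1 - θ) (Or.inr (by linarith))).tendsto.const_mul
      A).div_const (1 - θ)
    rw [zero_rpow (by linarith), mul_zero, zero_div] at this
    exact this.mono_left nhdsWithin_le_nhds
  obtain ⟨δ, hδB, hδ0, hδ1⟩ := ((hlim.eventually (Iic_mem_nhds hB)).and
    (eventually_mem_nhdsWithin.and (nhdsWithin_le_nhds (Iio_mem_nhds one_pos)))).exists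
  exact ⟨δ, hδ0, hδ1, hδB⟩

theorem integral_Ioc_exp_neg_mul_le_of_le_rpow {f : ℝ → ℝ} {A θ a : ℝ} (hθ : θ < 1)
    (ha0 : 0 < a) (ha1 : a ≤ 1) (hf : ∀ t, 0 < t → 0 ≤ f t)
    (hup : ∀ t, 0 < t → t ≤ 1 → f t ≤ A * t ^ (-θ)) :
    ∫ s in Ioc 0 a, exp (-s) * f s ≤ A * a ^ (1 - θ) / (1 - θ) := by
  have hθ' : -1 < -θ := by linarith
  calc ∫ s in Ioc 0 a, exp (-s) * f s ≤ ∫ s in Ioc 0 a, A * s ^ (-θ) := by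
        refine setIntegral_mono_of_nonneg (fun s hs => mul_nonneg (exp_pos _).le (hf s hs.1))
          (fun s hs => ?_) ?_
        · calc exp (-s) * f s ≤ 1 * f s :=
                mul_le_mul_of_nonneg_right (exp_le_one_iff.2 (by linarith [hs.1])) (hf s hs.1)
            _ ≤ A * s ^ (-θ) := (one_mul _).trans_le (hup s hs.1 (hs.2.trans ha1))
        · exact ((intervalIntegrable_iff_integrableOn_Ioc_of_le ha0.le).1
            (intervalIntegral.intervalIntegrable_rpow' hθ')).const_mul A
    _ = A * a ^ (1 - θ) / (1 - θ) := by
        rw [← intervalIntegral.integral_of_le ha0.le, intervalIntegral.integral_const_mul,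
          integral_rpow (Or.inl hθ'), zero_rpow (by linarith), neg_add_eq_sub]
        ring

theorem integral_Ioi_exp_neg_mul_le_of_antitoneOn {f : ℝ → ℝ} (hf : ∀ t, 0 < t → 0 ≤ f t)
    (hmono : AntitoneOn f (Ioi 0)) {a : ℝ} (ha : 0 < a) :
    ∫ s in Ioi a, exp (-s) * f s ≤ f a := calc
  ∫ s in Ioi a, exp (-s) * f s ≤ ∫ s in Ioi a, exp (-s) * f a := by
    refine setIntegral_mono_of_nonneg
      (fun s hs => mul_nonneg (exp_pos _).le (hf s (ha.trans hs))) (fun s hs => ?_)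
      ((integrableOn_exp_neg_Ioi a).mul_const _)
    exact mul_le_mul_of_nonneg_left (hmono ha (ha.trans hs) (le_of_lt hs)) (exp_pos _).le
  _ = exp (-a) * f a := by rw [integral_mul_const, integral_exp_neg_Ioi]
  _ ≤ f a := mul_le_of_le_one_left (hf a ha) (exp_le_one_iff.2 (by linarith))

theorem integral_Ioi_exp_neg_mul_le_of_le_mul_exp {f : ℝ → ℝ} (hf : ∀ t, 0 < t → 0 ≤ f t)
    (hmono : AntitoneOn f (Ioi 0)) {a k : ℝ} (ha : 0 < a) (hk : 0 < k)
    (hchord : ∀ s, a < s → s ≤ 1 → f s ≤ f a * exp (-(k * (s - a)))) :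
    ∫ s in Ioi a, exp (-s) * f s ≤ f a / k + f 1 := calc
  ∫ s in Ioi a, exp (-s) * f s
      ≤ ∫ s in Ioi a, f a * exp (k * a) * exp (-k * s) + f 1 * exp (-s) := by
    refine setIntegral_mono_of_nonneg
      (fun s hs => mul_nonneg (exp_pos _).le (hf s (ha.trans hs))) (fun s hs => ?_)
      (((exp_neg_integrableOn_Ioi a hk).const_mul _).add
        ((integrableOn_exp_neg_Ioi a).const_mul _))
    have hs0 : 0 < s := ha.trans hs
    rcases le_or_gt s 1 with hs1 | hs1
    · have : exp (-s) * f s ≤ f a * exp (k * a) * exp (-k * s) := calc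
        exp (-s) * f s ≤ f s := mul_le_of_le_one_left (hf s hs0) (exp_le_one_iff.2 (by linarith))
        _ ≤ f a * exp (-(k * (s - a))) := hchord s hs hs1
        _ = f a * exp (k * a) * exp (-k * s) := by rw [mul_assoc, ← exp_add]; ring_nf
      have : 0 ≤ f 1 * exp (-s) := mul_nonneg (hf 1 one_pos) (exp_pos _).le
      linarith
    · have : exp (-s) * f s ≤ f 1 * exp (-s) := by
        rw [mul_comm]
        exact mul_le_mul_of_nonneg_right (hmono (mem_Ioi.2 one_pos) hs0 hs1.le) (exp_pos _).le
      have : 0 ≤ f a * exp (k * a) * exp (-k * s) :=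
        mul_nonneg (mul_nonneg (hf a ha) (exp_pos _).le) (exp_pos _).le
      linarith
  _ = f a / k + f 1 * exp (-a) := by
    rw [integral_add ((exp_neg_integrableOn_Ioi a hk).const_mul _)
        ((integrableOn_exp_neg_Ioi a).const_mul _), integral_const_mul, integral_const_mul,
      integral_exp_mul_Ioi (neg_neg_of_pos hk), integral_exp_neg_Ioi, neg_div_neg_eq,
      mul_div_assoc', mul_assoc, ← exp_add]
    simp
  _ ≤ f a / k + f 1 := by
    gcongr
    exact mul_le_of_le_one_right (hf 1 one_pos) (exp_le_one_iff.2 (by linarith))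

def LogConvexOnIoi (f : ℝ → ℝ) : Prop :=
  ∀ a b : ℝ, 0 < a → 0 < b → ∀ l : ℝ, 0 ≤ l → l ≤ 1 →
    f (l * a + (1 - l) * b) ≤ f a ^ l * f b ^ (1 - l)

namespace LogConvexOnIoi

variable {f : ℝ → ℝ}

theorem comp_const_mul (hlc : LogConvexOnIoi f) {T : ℝ} (hT : 0 < T) :
    LogConvexOnIoi (fun s => f (T * s)) := fun a b ha hb l hl0 hl1 => by
  simpa only [mul_add, mul_left_comm T] using hlc _ _ (mul_pos hT ha) (mul_pos hT hb) l hl0 hl1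

theorem const_mul (hlc : LogConvexOnIoi f) (hf : ∀ t, 0 < t → 0 ≤ f t) {c : ℝ} (hc : 0 ≤ c) :
    LogConvexOnIoi (fun t => c * f t) := fun a b ha hb l hl0 hl1 => calc
  c * f (l * a + (1 - l) * b) ≤ c ^ l * c ^ (1 - l) * (f a ^ l * f b ^ (1 - l)) := by
    rw [← rpow_add' hc (by simp), add_sub_cancel, rpow_one]
    exact mul_le_mul_of_nonneg_left (hlc a b ha hb l hl0 hl1) hc
  _ = (c * f a) ^ l * (c * f b) ^ (1 - l) := by
    rw [mul_rpow hc (hf a ha), mul_rpow hc (hf b hb)]; ring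

theorem le_mul_exp_slope (hlc : LogConvexOnIoi f) (hf : ∀ t, 0 < t → 0 < f t) {x y z : ℝ}
    (hx : 0 < x) (hxz : x < z) (hxy : x ≤ y) (hyz : y ≤ z) :
    f y ≤ f x * exp (-((log (f x) - log (f z)) / (z - x) * (y - x))) := by
  have hzx : 0 < z - x := sub_pos.2 hxz
  set l := (z - y) / (z - x) with hl_def
  have hy : l * x + (1 - l) * z = y := by rw [hl_def]; field_simp; ring
  have hl : f x ^ l * f z ^ (1 - l) =
      f x * exp (-((log (f x) - log (f z)) / (z - x) * (y - x))) := by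
    rw [rpow_def_of_pos (hf x hx), rpow_def_of_pos (hf z (hx.trans hxz)), ← exp_add,
      ← exp_log (hf x hx), ← exp_add, exp_log (hf x hx)]
    congr 1
    rw [hl_def]
    field_simp
    ring
  rw [← hl, ← hy]
  exact hlc x z hx (hx.trans hxz) l (div_nonneg (by linarith) hzx.le)
    ((div_le_one hzx).2 (by linarith))

theorem mul_exp_neg_le_apply_one (hlc : LogConvexOnIoi f) (hf : ∀ t, 0 < t → 0 < f t)
    (hmono : AntitoneOn f (Ioi 0)) {a m K : ℝ} (ha0 : 0 < a) (ha1 : a < 1) (hm : 0 < m)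
    (htail : 2 * m ≤ ∫ s in Ioi a, exp (-s) * f s) (hfa : f a ≤ K * m) :
    m * exp (-K) ≤ f 1 := by
  have hf0 : ∀ t, 0 < t → 0 ≤ f t := fun t ht => (hf t ht).le
  have h2m : 2 * m ≤ f a := htail.trans (integral_Ioi_exp_neg_mul_le_of_antitoneOn hf0 hmono ha0)
  have hK : 0 ≤ K := nonneg_of_mul_nonneg_left (by linarith) hm
  by_cases hm1 : m ≤ f 1
  · exact (mul_le_of_le_one_right hm.le (exp_le_one_iff.2 (by linarith))).trans hm1
  push Not at hm1
  set k := (log (f a) - log (f 1)) / (1 - a) with hk_def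
  have hk : 0 < k := div_pos (sub_pos.2 (log_lt_log (hf 1 one_pos) (by linarith))) (by linarith)
  have hkK : k ≤ K := by
    have hchord : ∀ s, a < s → s ≤ 1 → f s ≤ f a * exp (-(k * (s - a))) := fun s has hs1 =>
      hlc.le_mul_exp_slope hf ha0 ha1 has.le hs1
    have hmass : 2 * m ≤ f a / k + f 1 :=
      htail.trans (integral_Ioi_exp_neg_mul_le_of_le_mul_exp hf0 hmono ha0 hk hchord)
    have : m * k < m * K := calc
      m * k < f a / k * k := by gcongr; linarith
      _ = f a := div_mul_cancel₀ _ hk.ne'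
      _ ≤ m * K := by linarith
    exact (lt_of_mul_lt_mul_left this hm.le).le
  calc m * exp (-K) ≤ f a * exp (-(k * (1 - a))) :=
        mul_le_mul (by linarith) (exp_le_exp.2 (neg_le_neg
          ((mul_le_of_le_one_right hk.le (by linarith)).trans hkK))) (exp_pos _).le (by linarith)
    _ = f 1 := by
        rw [hk_def, div_mul_cancel₀ _ (by linarith), neg_sub, exp_sub, exp_log (hf a ha0),
          exp_log (hf 1 one_pos)]
        field_simp [(hf a ha0).ne']

theorem const_mul_exp_le_apply_one (hlc : LogConvexOnIoi f) (hf : ∀ t, 0 < t → 0 < f t)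
    (hmono : AntitoneOn f (Ioi 0)) {A B θ δ d : ℝ} (hB : 0 < B) (hθ : θ < 1) (hδ0 : 0 < δ)
    (hδ1 : δ < 1) (hδ : A * δ ^ (1 - θ) / (1 - θ) ≤ B / 3) (hd0 : 0 < d) (hd1 : d ≤ 1)
    (hup : ∀ t, 0 < t → t ≤ 1 → f t ≤ A * t ^ (-θ))
    (hint : B * d ^ (1 - θ) ≤ ∫ s in Ioi 0, exp (-s) * f s) :
    B / 3 * exp (-(3 * A / (B * δ ^ θ) + (1 - θ)) / d) ≤ f 1 := by
  set a := δ * d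
  set m := B / 3 * d ^ (1 - θ) with hm_def
  have ha0 : 0 < a := by positivity
  have ha1 : a < 1 := by nlinarith
  have hm : 0 < m := by positivity
  have hg : IntegrableOn (fun s => exp (-s) * f s) (Ioi 0) :=
    Integrable.of_integral_ne_zero (lt_of_lt_of_le (by positivity) hint).ne'
  have hsmall : ∫ s in Ioc 0 a, exp (-s) * f s ≤ m := calc
    _ ≤ A * a ^ (1 - θ) / (1 - θ) :=
      integral_Ioc_exp_neg_mul_le_of_le_rpow hθ ha0 ha1.le (fun t ht => (hf t ht).le) hup
    _ = A * δ ^ (1 - θ) / (1 - θ) * d ^ (1 - θ) := by rw [mul_rpow hδ0.le hd0.le]; ring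
    _ ≤ m := mul_le_mul_of_nonneg_right hδ (by positivity)
  have htail : 2 * m ≤ ∫ s in Ioi a, exp (-s) * f s := by
    have hsplit := setIntegral_union (Ioc_disjoint_Ioi le_rfl) measurableSet_Ioi
      (hg.mono_set Ioc_subset_Ioi_self) (hg.mono_set (Ioi_subset_Ioi ha0.le))
    rw [Ioc_union_Ioi_eq_Ioi ha0.le] at hsplit
    linarith [hm_def]
  have hfa : f a ≤ 3 * A / (B * δ ^ θ) / d * m := calc
    f a ≤ A * a ^ (-θ) := hup a ha0 ha1.le
    _ = 3 * A / (B * δ ^ θ) / d * m := by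
      rw [hm_def, mul_rpow hδ0.le hd0.le, rpow_neg hδ0.le, rpow_neg hd0.le, rpow_sub hd0,
        rpow_one]
      field_simp
  calc B / 3 * exp (-(3 * A / (B * δ ^ θ) + (1 - θ)) / d)
      = B / 3 * exp (-(1 - θ) / d) * exp (-(3 * A / (B * δ ^ θ) / d)) := by
        rw [mul_assoc, ← exp_add]; ring_nf
    _ ≤ m * exp (-(3 * A / (B * δ ^ θ) / d)) := by
        rw [hm_def]
        gcongr; exact exp_neg_div_le_rpow hd0 (by linarith)
    _ ≤ f 1 := hlc.mul_exp_neg_le_apply_one hf hmono ha0 ha1 hm htail hfa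

end LogConvexOnIoi

theorem intermediate_time_lower_bound_general
    (A B θ : ℝ) (hA : 0 < A) (hB : 0 < B) (hθ1 : θ < 1) :
    ∃ c C : ℝ, 0 < c ∧ 0 < C ∧
      ∀ (T D : ℝ) (f : ℝ → ℝ), 0 < T → 0 < D → D ≤ T →
        (∀ t : ℝ, 0 < t → 0 < f t) →
        (∀ a b : ℝ, 0 < a → a ≤ b → f b ≤ f a) →
        (∀ a b : ℝ, 0 < a → 0 < b → ∀ l : ℝ, 0 ≤ l → l ≤ 1 →
          f (l * a + (1 - l) * b) ≤ f a ^ l * f b ^ (1 - l)) →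
        (∀ t : ℝ, 0 < t → t ≤ T → f t ≤ A * t ^ (-θ)) →
        (B * D ^ (1 - θ) * T⁻¹ ≤ ∫ s in Set.Ioi (0 : ℝ), Real.exp (-s) * f (T * s)) →
        c * T ^ (-θ) * Real.exp (-C * T / D) ≤ f T := by
  obtain ⟨δ, hδ0, hδ1, hδ⟩ :=
    exists_pos_lt_one_mul_rpow_div_le (A := A) (B := B / 3) (by positivity) hθ1
  refine ⟨B / 3, 3 * A / (B * δ ^ θ) + (1 - θ), by positivity,
    add_pos (by positivity) (by linarith), ?_⟩
  intro T D f hT hD hDT hf hmono hlc hup hint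
  have hTθ : 0 < T ^ θ := rpow_pos_of_pos hT θ
  have hpos : ∀ s, 0 < s → 0 < T ^ θ * f (T * s) := fun s hs =>
    mul_pos hTθ (hf _ (mul_pos hT hs))
  have hanti : AntitoneOn (fun s => T ^ θ * f (T * s)) (Ioi 0) := fun s hs t _ hst =>
    mul_le_mul_of_nonneg_left (hmono _ _ (mul_pos hT hs) (by gcongr)) hTθ.le
  have hlcT : LogConvexOnIoi (fun s => T ^ θ * f (T * s)) :=
    (LogConvexOnIoi.comp_const_mul hlc hT).const_mul (fun s hs => (hf _ (mul_pos hT hs)).le) hTθ.le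
  have hupT : ∀ s, 0 < s → s ≤ 1 → T ^ θ * f (T * s) ≤ A * s ^ (-θ) := fun s hs hs1 => calc
    T ^ θ * f (T * s) ≤ T ^ θ * (A * (T * s) ^ (-θ)) :=
      mul_le_mul_of_nonneg_left (hup _ (mul_pos hT hs) (by nlinarith)) hTθ.le
    _ = A * s ^ (-θ) := by rw [mul_rpow hT.le hs.le, rpow_neg hT.le]; field_simp
  have hintT : B * (D / T) ^ (1 - θ) ≤ ∫ s in Ioi 0, exp (-s) * (T ^ θ * f (T * s)) := calc
    B * (D / T) ^ (1 - θ) = T ^ θ * (B * D ^ (1 - θ) * T⁻¹) := by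
      rw [div_rpow hD.le hT.le, rpow_sub hT, rpow_one]; field_simp
    _ ≤ T ^ θ * ∫ s in Ioi 0, exp (-s) * f (T * s) := by gcongr
    _ = ∫ s in Ioi 0, exp (-s) * (T ^ θ * f (T * s)) := by
      rw [← integral_const_mul]; congr 1; ext s; ring
  have key := hlcT.const_mul_exp_le_apply_one hpos hanti hB hθ1 hδ0 hδ1 hδ (div_pos hD hT)
    ((div_le_one hT).2 hDT) hupT hintT
  rw [mul_one, div_div_eq_mul_div] at key
  rw [rpow_neg hT.le, mul_right_comm, ← div_eq_mul_inv, div_le_iff₀ hTθ, mul_comm (f T)]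
  exact key

/-- **Intermediate-time heat kernel lower bound** (abstract form).
For every `A, B > 0` and `θ ∈ (0,1)` there are `c, C > 0` such that for every `T > 0`,
every `0 < D ≤ T`, and every nonincreasing log-convex `f : (0,∞) → (0,∞)` with
`f(t) ≤ A t^{−θ}` for `0 < t ≤ T` and `∫₀^∞ e^{−s} f(Ts) ds ≥ B D^{1−θ} T^{−1}`,
one has `f(T) ≥ c T^{−θ} exp(−C T/D)`. -/
theorem intermediate_time_lower_bound
    (A B θ : ℝ) (hA : 0 < A) (hB : 0 < B) (hθ0 : 0 < θ) (hθ1 : θ < 1) :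
    ∃ c C : ℝ, 0 < c ∧ 0 < C ∧
      ∀ (T D : ℝ) (f : ℝ → ℝ), 0 < T → 0 < D → D ≤ T →
        (∀ t : ℝ, 0 < t → 0 < f t) →
        (∀ a b : ℝ, 0 < a → a ≤ b → f b ≤ f a) →
        (∀ a b : ℝ, 0 < a → 0 < b → ∀ l : ℝ, 0 ≤ l → l ≤ 1 →
          f (l * a + (1 - l) * b) ≤ f a ^ l * f b ^ (1 - l)) →
        (∀ t : ℝ, 0 < t → t ≤ T → f t ≤ A * t ^ (-θ)) →
        (B * D ^ (1 - θ) * T⁻¹ ≤ ∫ s in Set.Ioi (0 : ℝ), Real.exp (-s) * f (T * s)) →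
        c * T ^ (-θ) * Real.exp (-C * T / D) ≤ f T :=
  intermediate_time_lower_bound_general A B θ hA hB hθ1
end

section
/- For every A₁ > 0, A₂ > 0, B > 0, θ ∈ (0,1) and μ > 0 there exist constants c > 0 and C > 0 with the following property: for every T ≥ 2/μ, every λ with 0 < λ ≤ min(1, T), and every nonincreasing, log-convex function f : (0,∞) → (0,∞) satisfying f(t) ≤ A₁ t^{−θ} for all 0 < t ≤ 1/μ, f(t) ≤ A₂ e^{−μt} for all t ≥ 1/μ, and ∫₀^∞ e^{−s} f(Ts) ds ≥ B λ^{1−θ} T^{−1}, one has f(T) ≥ c λ^{1−θ} e^{−μT} exp(−C (T/λ)^{1/(1−θ)}). -/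
/-!
Split `∫₀^∞ e^{-s} f(Ts) ds` at `s = δλ/T`: on the near part the short-time bound contributes at
most `A₁ (δλ)^{1-θ} / ((1-θ) T)`, which is half the assumed lower bound once `δ` is small, and on
the far part `f(Ts) ≤ f(δλ)`. Hence `f(δλ) ≥ m := (B/2) λ^{1-θ} / T`. Log-convexity along
`δλ/2 < δλ ≤ T` extrapolates this to `f(T) ≥ (m/M)^{2T/(δλ)}`, where `M = (B/2) K λ^{-θ}` bounds
`f(δλ/2)` by the short-time bound; the powers of `λ` cancel in `M/m = K T/λ`. Finally
`(T/λ) log (K T/λ) ≲ (T/λ)^{1 + θ/(1-θ)}`, and the factor `λ^{1-θ} e^{-μT} ≤ 1` is dropped.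
-/

open MeasureTheory Real Set Filter Topology

def LogConvexOnPos (f : ℝ → ℝ) : Prop :=
  ∀ a b : ℝ, 0 < a → 0 < b → ∀ lam : ℝ, 0 ≤ lam → lam ≤ 1 →
    f (lam * a + (1 - lam) * b) ≤ f a ^ lam * f b ^ (1 - lam)

theorem integral_exp_neg_mul_comp_le {f : ℝ → ℝ} {A θ T t₀ : ℝ} (hθ : θ < 1) (hT : 0 < T)
    (ht₀ : 0 < t₀) (hf_pos : ∀ t, 0 < t → 0 < f t) (hf_anti : AntitoneOn f (Ioi 0))
    (hf_le : ∀ t, 0 < t → t ≤ t₀ → f t ≤ A * t ^ (-θ)) :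
    ∫ s in Ioi 0, exp (-s) * f (T * s) ≤ A / (1 - θ) * t₀ ^ (1 - θ) * T⁻¹ + f t₀ := by
  have hθ' : 0 < 1 - θ := by linarith
  have hft₀ : 0 < f t₀ := hf_pos t₀ ht₀
  have hA : 0 < A :=
    pos_of_mul_pos_left (hft₀.trans_le (hf_le t₀ ht₀ le_rfl)) (rpow_pos_of_pos ht₀ _).le
  set ε := t₀ / T with hε_def
  have hε : 0 < ε := div_pos ht₀ hT
  have hTε : T * ε = t₀ := mul_div_cancel₀ t₀ hT.ne'
  by_cases hint : IntegrableOn (fun s => exp (-s) * f (T * s)) (Ioi 0)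
  swap
  · rw [integral_undef hint]; positivity
  rw [← Ioc_union_Ioi_eq_Ioi hε.le, setIntegral_union (Ioc_disjoint_Ioi le_rfl) measurableSet_Ioi
    (hint.mono_set Ioc_subset_Ioi_self) (hint.mono_set (Ioi_subset_Ioi hε.le))]
  gcongr
  · have hrpow : IntegrableOn (fun s : ℝ => A * T ^ (-θ) * s ^ (-θ)) (Ioc 0 ε) :=
      ((intervalIntegral.intervalIntegrable_rpow' (by linarith)).1.const_mul _)
    calc ∫ s in Ioc 0 ε, exp (-s) * f (T * s)
        ≤ ∫ s in Ioc 0 ε, A * T ^ (-θ) * s ^ (-θ) := by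
          refine setIntegral_mono_on (hint.mono_set Ioc_subset_Ioi_self) hrpow measurableSet_Ioc ?_
          rintro s ⟨hs, hsε⟩
          have hTs : 0 < T * s := mul_pos hT hs
          calc exp (-s) * f (T * s) ≤ 1 * f (T * s) := by
                gcongr
                · exact (hf_pos _ hTs).le
                · exact exp_le_one_iff.mpr (by linarith)
            _ ≤ A * (T * s) ^ (-θ) := by
                rw [one_mul]; exact hf_le _ hTs (hTε ▸ by gcongr)
            _ = A * T ^ (-θ) * s ^ (-θ) := by rw [mul_rpow hT.le hs.le, mul_assoc]
      _ = A / (1 - θ) * t₀ ^ (1 - θ) * T⁻¹ := by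
          rw [← intervalIntegral.integral_of_le hε.le, intervalIntegral.integral_const_mul,
            integral_rpow (Or.inl (by linarith)), show -θ + 1 = 1 - θ by ring,
            zero_rpow hθ'.ne', hε_def, div_rpow ht₀.le hT.le, rpow_sub hT, rpow_one, rpow_neg hT.le]
          field_simp
          ring
  · calc ∫ s in Ioi ε, exp (-s) * f (T * s)
        ≤ ∫ s in Ioi ε, exp (-s) * f t₀ := by
          refine setIntegral_mono_on (hint.mono_set (Ioi_subset_Ioi hε.le))
            ((integrableOn_exp_neg_Ioi ε).mul_const _) measurableSet_Ioi fun s hs => ?_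
          have : t₀ ≤ T * s := hTε ▸ mul_le_mul_of_nonneg_left (le_of_lt hs) hT.le
          gcongr
          exact hf_anti ht₀ (ht₀.trans_le this) this
      _ = exp (-ε) * f t₀ := by rw [integral_mul_const, integral_exp_neg_Ioi]
      _ ≤ f t₀ := mul_le_of_le_one_left hft₀.le (exp_le_one_iff.mpr (by linarith))

theorem half_mul_inv_le_of_le_integral {f : ℝ → ℝ} {A B θ T t₀ : ℝ} (hθ : θ < 1) (hT : 0 < T)
    (ht₀ : 0 < t₀) (hf_pos : ∀ t, 0 < t → 0 < f t) (hf_anti : AntitoneOn f (Ioi 0))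
    (hf_le : ∀ t, 0 < t → t ≤ t₀ → f t ≤ A * t ^ (-θ))
    (hsmall : A / (1 - θ) * t₀ ^ (1 - θ) ≤ B / 2)
    (hint : B * T⁻¹ ≤ ∫ s in Ioi 0, exp (-s) * f (T * s)) :
    B / 2 * T⁻¹ ≤ f t₀ := by
  have hnear : A / (1 - θ) * t₀ ^ (1 - θ) * T⁻¹ ≤ B / 2 * T⁻¹ := by gcongr
  linarith [integral_exp_neg_mul_comp_le hθ hT ht₀ hf_pos hf_anti hf_le]

theorem LogConvexOnPos.div_rpow_le {f : ℝ → ℝ} (hf : LogConvexOnPos f)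
    (hf_pos : ∀ t, 0 < t → 0 < f t) {a b c m M : ℝ} (ha : 0 < a) (hab : a < b) (hbc : b ≤ c)
    (hm : 0 < m) (hmb : m ≤ f b) (hfa : f a ≤ M) (hM : 1 ≤ M) (hmM : m ≤ M) :
    (m / M) ^ (c / (b - a)) ≤ f c := by
  have hba : 0 < b - a := by linarith
  have hca : 0 < c - a := by linarith
  set lam := (c - b) / (c - a) with hlam
  have hlam1 : 1 - lam = (b - a) / (c - a) := by rw [hlam]; field_simp; ring
  have hb : lam * a + (1 - lam) * c = b := by rw [hlam1, hlam]; field_simp; ring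
  have hlam_nonneg : 0 ≤ lam := div_nonneg (by linarith) hca.le
  have hlam_le : lam ≤ 1 := by linarith [div_pos hba hca]
  have hc : 0 < c := ha.trans_le (hab.le.trans hbc)
  have hfc := hf_pos c hc
  have hfa_lam : f a ^ lam ≤ M :=
    (rpow_le_rpow (hf_pos a ha).le hfa hlam_nonneg).trans (rpow_le_self_of_one_le hM hlam_le)
  have key : m / M ≤ f c ^ (1 - lam) := by
    rw [div_le_iff₀ (by linarith), mul_comm]
    calc m ≤ f (lam * a + (1 - lam) * c) := hb ▸ hmb
      _ ≤ f a ^ lam * f c ^ (1 - lam) := hf a c ha hc lam hlam_nonneg hlam_le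
      _ ≤ M * f c ^ (1 - lam) := by gcongr
  calc (m / M) ^ (c / (b - a))
      ≤ (m / M) ^ ((c - a) / (b - a)) :=
        rpow_le_rpow_of_exponent_ge (by positivity) (div_le_one_of_le₀ hmM (by linarith))
          (by gcongr; linarith)
    _ ≤ (f c ^ (1 - lam)) ^ ((c - a) / (b - a)) := by gcongr
    _ = f c := by
        rw [← rpow_mul hfc.le, hlam1, div_mul_div_cancel₀ hca.ne', div_self hba.ne', rpow_one]

theorem exp_neg_mul_rpow_le_inv_rpow {K x q c : ℝ} (hK : 1 ≤ K) (hx : 1 ≤ x) (hq : 0 < q)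
    (hc : 0 ≤ c) : exp (-(c * (log K + 1 / q)) * x ^ (q + 1)) ≤ (K * x)⁻¹ ^ (c * x) := by
  have hx0 : 0 < x := by linarith
  have hlog : x * log (K * x) ≤ (log K + 1 / q) * x ^ (q + 1) :=
    calc x * log (K * x) = x * (log K + log x) := by rw [log_mul (by positivity) hx0.ne']
      _ ≤ x * (log K * x ^ q + x ^ q / q) := by
          gcongr
          · exact le_mul_of_one_le_right (log_nonneg hK) (one_le_rpow hx hq.le)
          · exact log_le_rpow_div hx0.le hq
      _ = (log K + 1 / q) * x ^ (q + 1) := by rw [rpow_add_one hx0.ne']; ring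
  rw [rpow_def_of_pos (inv_pos.2 (by positivity : 0 < K * x)), log_inv, exp_le_exp]
  nlinarith [mul_le_mul_of_nonneg_left hlog hc]

theorem exists_small_rpow_le (A : ℝ) {B θ μ : ℝ} (hB : 0 < B) (hθ : θ < 1) (hμ : 0 < μ) :
    ∃ δ, 0 < δ ∧ δ ≤ 1 ∧ δ ≤ 1 / μ ∧ A / (1 - θ) * δ ^ (1 - θ) ≤ B / 2 := by
  have hlim : Tendsto (fun δ : ℝ => A / (1 - θ) * δ ^ (1 - θ)) (𝓝 0) (𝓝 0) := by
    simpa [zero_rpow (by linarith : 1 - θ ≠ 0)] using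
      ((continuousAt_rpow_const 0 (1 - θ) (Or.inr (by linarith))).tendsto.const_mul (A / (1 - θ)))
  have hsmall : ∀ᶠ δ in 𝓝 (0 : ℝ), δ ≤ 1 ∧ δ ≤ 1 / μ ∧ A / (1 - θ) * δ ^ (1 - θ) ≤ B / 2 :=
    (eventually_le_nhds one_pos).and ((eventually_le_nhds (by positivity)).and
      (hlim.eventually (eventually_le_nhds (half_pos hB))))
  obtain ⟨δ, hδ_small, hδ⟩ :=
    ((hsmall.filter_mono nhdsWithin_le_nhds).and
      (self_mem_nhdsWithin : ∀ᶠ δ in 𝓝[>] (0 : ℝ), 0 < δ)).exists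
  exact ⟨δ, hδ, hδ_small⟩

theorem exp_neg_rpow_le_of_le {A B θ μ δ K : ℝ} (hB : 0 < B) (hθ0 : 0 < θ) (hθ1 : θ < 1)
    (hδ : 0 < δ) (hδ1 : δ ≤ 1) (hδμ : δ ≤ 1 / μ) (hδA : A / (1 - θ) * δ ^ (1 - θ) ≤ B / 2)
    (hK1 : 1 ≤ K) (hKB : 1 ≤ B / 2 * K) (hKA : A * (δ / 2) ^ (-θ) ≤ B / 2 * K)
    {T l : ℝ} {f : ℝ → ℝ} (hl : 0 < l) (hlT : l ≤ min 1 T) (hf_pos : ∀ t, 0 < t → 0 < f t)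
    (hf_anti : AntitoneOn f (Ioi 0)) (hf_conv : LogConvexOnPos f)
    (hf_short : ∀ t, 0 < t → t ≤ 1 / μ → f t ≤ A * t ^ (-θ))
    (hint : B * l ^ (1 - θ) * T⁻¹ ≤ ∫ s in Ioi 0, exp (-s) * f (T * s)) :
    exp (-(2 / δ * (log K + 1 / (θ / (1 - θ)))) * (T / l) ^ (1 / (1 - θ))) ≤ f T := by
  have hl1 : l ≤ 1 := hlT.trans (min_le_left _ _)
  have hT : 0 < T := hl.trans_le (hlT.trans (min_le_right _ _))
  have hx : 1 ≤ T / l := (one_le_div hl).2 (hlT.trans (min_le_right _ _))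
  have hδl : δ * l ≤ 1 / μ := (mul_le_of_le_one_right hδ.le hl1).trans hδμ
  set m := B * l ^ (1 - θ) / 2 * T⁻¹ with hm
  set M := B / 2 * K * l ^ (-θ) with hM
  have hm_le : m ≤ f (δ * l) := by
    refine half_mul_inv_le_of_le_integral hθ1 hT (mul_pos hδ hl) hf_pos hf_anti
      (fun t ht htδ => hf_short t ht (htδ.trans hδl)) ?_ hint
    rw [mul_rpow hδ.le hl.le, ← mul_assoc, mul_div_right_comm]
    gcongr
  have hfa : f (δ * l / 2) ≤ M := by
    calc f (δ * l / 2) ≤ A * (δ * l / 2) ^ (-θ) := hf_short _ (by positivity) (by linarith)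
      _ = A * (δ / 2) ^ (-θ) * l ^ (-θ) := by
          rw [mul_div_right_comm, mul_rpow (by positivity) hl.le, mul_assoc]
      _ ≤ M := by rw [hM]; gcongr
  have hmM : m / M = (K * (T / l))⁻¹ := by
    rw [hm, hM, sub_eq_add_neg, rpow_add hl, rpow_one]
    field_simp
  have hKx : 1 ≤ K * (T / l) := one_le_mul_of_one_le_of_one_le hK1 hx
  have hM1 : 1 ≤ M :=
    one_le_mul_of_one_le_of_one_le hKB (one_le_rpow_of_pos_of_le_one_of_nonpos hl hl1 (by linarith))
  have hmM_le : m ≤ M := by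
    rw [← div_le_one (by linarith), hmM]; exact inv_le_one_of_one_le₀ hKx
  calc exp (-(2 / δ * (log K + 1 / (θ / (1 - θ)))) * (T / l) ^ (1 / (1 - θ)))
      ≤ (K * (T / l))⁻¹ ^ (2 / δ * (T / l)) := by
        have hq1 : θ / (1 - θ) + 1 = 1 / (1 - θ) := by
          field_simp [(by linarith : 1 - θ ≠ 0)]; ring
        exact hq1 ▸ exp_neg_mul_rpow_le_inv_rpow hK1 hx (by bound) (by positivity)
    _ = (m / M) ^ (T / (δ * l - δ * l / 2)) := by
        rw [hmM]
        congr 1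
        field_simp
        ring
    _ ≤ f T :=
        hf_conv.div_rpow_le hf_pos (by positivity) (by linarith [mul_pos hδ hl])
          ((mul_le_of_le_one_left hl.le hδ1).trans (hlT.trans (min_le_right _ _)))
          (by positivity) hm_le hfa hM1 hmM_le

theorem exists_exp_neg_rpow_le {A B θ μ : ℝ} (hA : 0 ≤ A) (hB : 0 < B) (hθ0 : 0 < θ)
    (hθ1 : θ < 1) (hμ : 0 < μ) :
    ∃ C > 0, ∀ (T l : ℝ) (f : ℝ → ℝ), 0 < l → l ≤ min 1 T →
      (∀ t, 0 < t → 0 < f t) → AntitoneOn f (Ioi 0) → LogConvexOnPos f →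
      (∀ t, 0 < t → t ≤ 1 / μ → f t ≤ A * t ^ (-θ)) →
      B * l ^ (1 - θ) * T⁻¹ ≤ ∫ s in Ioi 0, exp (-s) * f (T * s) →
      exp (-C * (T / l) ^ (1 / (1 - θ))) ≤ f T := by
  obtain ⟨δ, hδ, hδ1, hδμ, hδA⟩ := exists_small_rpow_le A hB hθ1 hμ
  set K := 2 / B * (A * (δ / 2) ^ (-θ) + 1) + 1 with hK
  have hAδ : 0 ≤ A * (δ / 2) ^ (-θ) := by positivity
  have hBK : B / 2 * K = A * (δ / 2) ^ (-θ) + 1 + B / 2 := by rw [hK]; field_simp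
  have hK1 : 1 ≤ K := le_add_of_nonneg_left (by positivity)
  refine ⟨2 / δ * (log K + 1 / (θ / (1 - θ))), by have := log_nonneg hK1; positivity,
    fun T l f hl hlT hf_pos hf_anti hf_conv hf_short hint => ?_⟩
  exact exp_neg_rpow_le_of_le hB hθ0 hθ1 hδ hδ1 hδμ hδA hK1 (by linarith) (by linarith) hl hlT
    hf_pos hf_anti hf_conv hf_short hint

theorem long_time_lower_bound_general
    (A₁ A₂ B θ μ : ℝ) (hA₁ : 0 < A₁) (hB : 0 < B)
    (hθ0 : 0 < θ) (hθ1 : θ < 1) (hμ : 0 < μ) :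
    ∃ c C : ℝ, 0 < c ∧ 0 < C ∧
      ∀ (T l : ℝ) (f : ℝ → ℝ), 2 / μ ≤ T → 0 < l → l ≤ min 1 T →
        (∀ t : ℝ, 0 < t → 0 < f t) →
        (∀ a b : ℝ, 0 < a → a ≤ b → f b ≤ f a) →
        (∀ a b : ℝ, 0 < a → 0 < b → ∀ lam : ℝ, 0 ≤ lam → lam ≤ 1 →
          f (lam * a + (1 - lam) * b) ≤ f a ^ lam * f b ^ (1 - lam)) →
        (∀ t : ℝ, 0 < t → t ≤ 1 / μ → f t ≤ A₁ * t ^ (-θ)) →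
        (∀ t : ℝ, 1 / μ ≤ t → f t ≤ A₂ * Real.exp (-μ * t)) →
        (B * l ^ (1 - θ) * T⁻¹ ≤ ∫ s in Set.Ioi (0 : ℝ), Real.exp (-s) * f (T * s)) →
        c * l ^ (1 - θ) * Real.exp (-μ * T) *
            Real.exp (-C * (T / l) ^ (1 / (1 - θ))) ≤ f T := by
  obtain ⟨C, hC, hlower⟩ := exists_exp_neg_rpow_le hA₁.le hB hθ0 hθ1 hμ
  refine ⟨1, C, one_pos, hC, fun T l f _ hl hlT hf_pos hf_anti hf_conv hf_short _ hint => ?_⟩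
  have hT : 0 < T := hl.trans_le (hlT.trans (min_le_right _ _))
  have hprefactor : 1 * l ^ (1 - θ) * exp (-μ * T) ≤ 1 := by
    rw [one_mul]
    exact mul_le_one₀ (rpow_le_one hl.le (hlT.trans (min_le_left _ _)) (by linarith))
      (exp_nonneg _) (exp_le_one_iff.2 (by nlinarith))
  calc _ ≤ exp (-C * (T / l) ^ (1 / (1 - θ))) := mul_le_of_le_one_left (exp_nonneg _) hprefactor
    _ ≤ f T := hlower T l f hl hlT hf_pos (fun a ha b _ hab => hf_anti a b ha hab) hf_conv
        hf_short hint

/-- **Long-time heat kernel lower bound** (abstract form).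
For every `A₁, A₂, B > 0`, `θ ∈ (0,1)` and `μ > 0` there are `c, C > 0` such that for
every `T ≥ 2/μ`, every `0 < λ ≤ min(1, T)`, and every nonincreasing log-convex
`f : (0,∞) → (0,∞)` with `f(t) ≤ A₁ t^{−θ}` for `0 < t ≤ 1/μ`, `f(t) ≤ A₂ e^{−μt}` for
`t ≥ 1/μ`, and `∫₀^∞ e^{−s} f(Ts) ds ≥ B λ^{1−θ} T^{−1}`, one has
`f(T) ≥ c λ^{1−θ} e^{−μT} exp(−C (T/λ)^{1/(1−θ)})`. -/
theorem long_time_lower_bound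
    (A₁ A₂ B θ μ : ℝ) (hA₁ : 0 < A₁) (hA₂ : 0 < A₂) (hB : 0 < B)
    (hθ0 : 0 < θ) (hθ1 : θ < 1) (hμ : 0 < μ) :
    ∃ c C : ℝ, 0 < c ∧ 0 < C ∧
      ∀ (T l : ℝ) (f : ℝ → ℝ), 2 / μ ≤ T → 0 < l → l ≤ min 1 T →
        (∀ t : ℝ, 0 < t → 0 < f t) →
        (∀ a b : ℝ, 0 < a → a ≤ b → f b ≤ f a) →
        (∀ a b : ℝ, 0 < a → 0 < b → ∀ lam : ℝ, 0 ≤ lam → lam ≤ 1 →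
          f (lam * a + (1 - lam) * b) ≤ f a ^ lam * f b ^ (1 - lam)) →
        (∀ t : ℝ, 0 < t → t ≤ 1 / μ → f t ≤ A₁ * t ^ (-θ)) →
        (∀ t : ℝ, 1 / μ ≤ t → f t ≤ A₂ * Real.exp (-μ * t)) →
        (B * l ^ (1 - θ) * T⁻¹ ≤ ∫ s in Set.Ioi (0 : ℝ), Real.exp (-s) * f (T * s)) →
        c * l ^ (1 - θ) * Real.exp (-μ * T) *
            Real.exp (-C * (T / l) ^ (1 / (1 - θ))) ≤ f T :=
  long_time_lower_bound_general A₁ A₂ B θ μ hA₁ hB hθ0 hθ1 hμ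
end
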